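/- arXiv:1510.01454 — 7 statements merged into one kernel-verified Lean document; each statement's English description precedes it below -/
import Mathlib

section
/- For every positive integer N, the sum over all compositions m = (m₁,…,m_ℓ) of N of the quantity α(m) = (1/m₁)·∏_{j=1}^{ℓ-1} C(m_j + m_{j+1} - 1, m_{j+1}) equals (1/(2N))·C(2N, N). -/
/-- β(m) = ∏_{j=1}^{ℓ-1} C(m_j + m_{j+1} - 1, m_{j+1}) for a list m = (m₁,…,m_ℓ). -/
def betaComp : List ℕ → ℕ
  | [] => 1
  | [_] => 1
  | a :: b :: l => Nat.choose (a + b - 1) b * betaComp (b :: l)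

/-- α(m) = β(m)/m₁ as a rational number. -/
def alphaComp (l : List ℕ) : ℚ := (betaComp l : ℚ) / (l.headI : ℚ)

/-!
Let `B(n, k)` be the sum of `β(k :: m)` over the compositions `m` of `n`. Splitting off the
first block of `m` writes `B(n + 1, k)` as a convolution of binomial coefficients with the values
`B(j, i + 1)`, and by induction this convolution becomes an upper Chu–Vandermonde sum, giving the
ballot-number formula `B(n, k) = k / (n + k) · C(2n + k - 1, n)`. As `α(m) = β(m) / m₁`, the sum
in the theorem is `∑ₖ B(N - k, k) / k = (1 / N) ∑ₖ C(2N - k - 1, N - k)`, which the hockey-stick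
identity evaluates to `C(2N - 1, N) / N = C(2N, N) / (2N)`.
-/

open Finset PowerSeries

/-- Compare the coefficients of `Xⁿ` in `(1 - X)⁻⁽ᵃ⁺¹⁾ (1 - X)⁻⁽ᵇ⁺¹⁾ = (1 - X)⁻⁽ᵃ⁺ᵇ⁺²⁾`. -/
theorem Nat.sum_antidiagonal_add_choose_mul_add_choose (a b n : ℕ) :
    ∑ p ∈ antidiagonal n, (a + p.1).choose a * (b + p.2).choose b
      = (a + b + 1 + n).choose (a + b + 1) := by
  have h := congrArg (coeff n) (pow_add (mk 1 : ℤ⟦X⟧) (a + 1) (b + 1))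
  rw [show a + 1 + (b + 1) = a + b + 1 + 1 by ring, mk_one_pow_eq_mk_choose_add,
    mk_one_pow_eq_mk_choose_add, mk_one_pow_eq_mk_choose_add, coeff_mul] at h
  simp only [coeff_mk] at h
  exact_mod_cast h.symm

theorem Nat.choose_two_mul_succ_eq_two_mul_choose (n : ℕ) :
    (2 * (n + 1)).choose (n + 1) = 2 * (2 * n + 1).choose (n + 1) := by
  rw [show 2 * (n + 1) = 2 * n + 1 + 1 by ring, Nat.choose_succ_succ, Nat.choose_symm_half]
  ring

namespace Composition

instance subsingleton_zero : Subsingleton (Composition 0) :=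
  ⟨fun a b => Composition.ext <| (a.blocks_eq_nil.mpr rfl).trans (b.blocks_eq_nil.mpr rfl).symm⟩

variable {M : Type*} [AddCommMonoid M] (f : List ℕ → M)

theorem sum_zero : ∑ c : Composition 0, f c.blocks = f [] := by
  rw [Fintype.sum_subsingleton _ default, Composition.blocks_eq_nil _ |>.mpr rfl]

theorem sum_succ_eq_sum_antidiagonal (n : ℕ) :
    ∑ c : Composition (n + 1), f c.blocks
      = ∑ p ∈ antidiagonal n, ∑ c : Composition p.2, f ((p.1 + 1) :: c.blocks) := by
  rw [← Finset.sum_sigma (antidiagonal n) (fun _ => univ)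
    (fun x : Σ p : ℕ × ℕ, Composition p.2 => f ((x.1.1 + 1) :: x.2.blocks))]
  symm
  refine Finset.sum_bij (fun x hx => ⟨(x.1.1 + 1) :: x.2.blocks, ?_, ?_⟩) (fun _ _ => mem_univ _)
    ?_ ?_ (fun _ _ => rfl)
  · intro i hi
    rcases List.mem_cons.mp hi with rfl | hi
    exacts [Nat.succ_pos _, x.2.blocks_pos hi]
  · rw [List.sum_cons, x.2.blocks_sum, add_right_comm,
      HasAntidiagonal.mem_antidiagonal.mp (mem_sigma.mp hx).1]
  · rintro ⟨⟨i, j⟩, c⟩ hx ⟨⟨i', j'⟩, c'⟩ hx' h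
    simp only [mem_sigma, HasAntidiagonal.mem_antidiagonal, mem_univ, and_true] at hx hx'
    obtain ⟨hi, hc⟩ := List.cons_eq_cons.mp (congrArg Composition.blocks h)
    obtain rfl : i = i' := by simpa using hi
    obtain rfl : j = j' := by omega
    exact Sigma.ext rfl (heq_of_eq (Composition.ext hc))
  · rintro ⟨_ | ⟨a, l⟩, hpos, hsum⟩ -
    · simp at hsum
    · have ha := hpos List.mem_cons_self
      refine ⟨⟨(a - 1, l.sum), ⟨l, fun hi => hpos (List.mem_cons_of_mem a hi), rfl⟩⟩, ?_, ?_⟩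
      · simp only [List.sum_cons] at hsum
        simp only [mem_sigma, HasAntidiagonal.mem_antidiagonal, mem_univ, and_true]
        omega
      · ext1
        simp only [List.cons.injEq, and_true]
        omega

end Composition

def sumBetaCons (n k : ℕ) : ℕ := ∑ c : Composition n, betaComp (k :: c.blocks)

theorem sumBetaCons_zero (k : ℕ) : sumBetaCons 0 k = 1 := by
  rw [sumBetaCons, Composition.sum_zero (fun l => betaComp (k :: l)), betaComp]

theorem sumBetaCons_succ (m k : ℕ) :
    sumBetaCons (m + 1) (k + 1)
      = ∑ p ∈ antidiagonal m, (k + 1 + p.1).choose (p.1 + 1) * sumBetaCons p.2 (p.1 + 1) := by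
  rw [sumBetaCons, Composition.sum_succ_eq_sum_antidiagonal (fun l => betaComp ((k + 1) :: l))]
  refine sum_congr rfl fun p _ => ?_
  rw [sumBetaCons, mul_sum]
  refine sum_congr rfl fun c _ => ?_
  rw [betaComp, ← add_assoc, Nat.add_sub_cancel]

theorem sumBetaCons_mul (n k : ℕ) :
    sumBetaCons n (k + 1) * (n + k + 1) = (k + 1) * (2 * n + k).choose n := by
  induction n using Nat.strong_induction_on generalizing k with
  | _ n ih =>
    rcases n with _ | m
    · simp [sumBetaCons_zero]
    have hsum : sumBetaCons (m + 1) (k + 1) * (m + 1) = (k + 1) * (2 * m + k + 2).choose m := by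
      rw [sumBetaCons_succ, sum_mul]
      calc _ = ∑ p ∈ antidiagonal m,
              (k + 1) * ((k + 1 + p.1).choose (k + 1) * (m + p.2).choose m) := by
            refine sum_congr rfl fun ⟨i, j⟩ hij => ?_
            obtain rfl : i + j = m := mem_antidiagonal.mp hij
            have hj := ih j (by omega) i
            calc (k + 1 + i).choose (i + 1) * sumBetaCons j (i + 1) * (i + j + 1)
                = (k + 1 + i).choose (i + 1) * (i + 1) * (2 * j + i).choose j := by
                  rw [mul_assoc, add_comm i j, hj, mul_assoc]
              _ = (k + 1) * ((k + 1 + i).choose (k + 1) * (i + j + j).choose (i + j)) := by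
                  rw [Nat.choose_succ_right_eq, Nat.add_sub_cancel, Nat.choose_symm_add,
                    show 2 * j + i = i + j + j by ring, Nat.choose_symm_add]
                  ring
        _ = (k + 1) * (2 * m + k + 2).choose m := by
            rw [← mul_sum, Nat.sum_antidiagonal_add_choose_mul_add_choose,
              show k + 1 + m + 1 + m = (k + 1 + m + 1) + m by ring, Nat.choose_symm_add]
            ring_nf
    refine Nat.eq_of_mul_eq_mul_right (Nat.succ_pos m) ?_
    calc sumBetaCons (m + 1) (k + 1) * (m + 1 + k + 1) * (m + 1)
        = (k + 1) * ((2 * m + k + 2).choose m * (2 * m + k + 2 - m)) := by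
          rw [mul_right_comm, hsum, show 2 * m + k + 2 - m = m + 1 + k + 1 by omega, mul_assoc]
      _ = (k + 1) * (2 * (m + 1) + k).choose (m + 1) * (m + 1) := by
          rw [← Nat.choose_succ_right_eq, show 2 * (m + 1) + k = 2 * m + k + 2 by ring]
          ring

theorem sum_alphaComp_cons (i j : ℕ) :
    ∑ c : Composition j, alphaComp ((i + 1) :: c.blocks)
      = ((2 * j + i).choose j : ℚ) / (j + i + 1) := by
  have h : (sumBetaCons j (i + 1) : ℚ) * (j + i + 1) = (i + 1) * (2 * j + i).choose j := by
    exact_mod_cast sumBetaCons_mul j i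
  simp only [alphaComp, List.headI, ← sum_div, ← Nat.cast_sum]
  rw [← sumBetaCons, eq_div_iff (by positivity), div_mul_eq_mul_div, h]
  push_cast
  field_simp

/-- For every positive integer `N`, the sum of `α(m)` over all compositions `m` of `N`
equals `(1/(2N))·C(2N,N)`. -/
theorem sum_alpha_over_compositions (N : ℕ) (hN : 1 ≤ N) :
    ∑ m : Composition N, alphaComp m.blocks
      = (Nat.choose (2 * N) N : ℚ) / (2 * N) := by
  obtain ⟨n, rfl⟩ := Nat.exists_eq_add_of_le' hN
  rw [Composition.sum_succ_eq_sum_antidiagonal alphaComp]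
  calc ∑ p ∈ antidiagonal n, ∑ c : Composition p.2, alphaComp ((p.1 + 1) :: c.blocks)
      = ∑ p ∈ antidiagonal n, ((p.2 + n).choose n : ℚ) / (n + 1) := by
        refine sum_congr rfl fun ⟨i, j⟩ hij => ?_
        obtain rfl : i + j = n := mem_antidiagonal.mp hij
        rw [sum_alphaComp_cons, show 2 * j + i = j + (i + j) by ring, Nat.choose_symm_add]
        push_cast
        ring_nf
    _ = ((∑ j ∈ range (n + 1), (j + n).choose n : ℕ) : ℚ) / (n + 1) := by
        rw [← sum_div, ← Nat.sum_antidiagonal_swap]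
        simp only [Prod.snd_swap]
        rw [Nat.sum_antidiagonal_eq_sum_range_succ (fun i _ => ((i + n).choose n : ℚ))]
        push_cast
        rfl
    _ = ((2 * (n + 1)).choose (n + 1) : ℚ) / (2 * ((n + 1 : ℕ) : ℚ)) := by
        rw [Nat.sum_range_add_choose, Nat.choose_two_mul_succ_eq_two_mul_choose,
          show n + n + 1 = 2 * n + 1 by ring]
        push_cast
        field_simp
end

section
/- For every positive integer N, the sum over all compositions m = (m₁,…,m_ℓ) of N of β(m) = ∏_{j=1}^{ℓ-1} C(m_j + m_{j+1} - 1, m_{j+1}) equals the Catalan number C_N = (1/(N+1))·C(2N, N). -/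
open Finset PowerSeries

theorem Composition.sum_blocks_succ {M : Type*} [AddCommMonoid M] (n : ℕ) (f : List ℕ → M) :
    ∑ c : Composition (n + 1), f c.blocks =
      ∑ i ∈ range (n + 1), ∑ c : Composition (n - i), f ((i + 1) :: c.blocks) := by
  rw [← Fin.sum_univ_eq_sum_range (fun i => ∑ c : Composition (n - i), f ((i + 1) :: c.blocks)),
    ← Fintype.sum_sigma (fun p : Σ i : Fin (n + 1), Composition (n - i) =>
      f ((p.1 + 1) :: p.2.blocks))]
  let cons : (Σ i : Fin (n + 1), Composition (n - i)) → Composition (n + 1) := fun p =>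
    ⟨(p.1 + 1) :: p.2.blocks, by simpa using fun _ => p.2.blocks_pos, by
      simp [p.2.blocks_sum]; omega⟩
  refine (Fintype.sum_bijective cons ⟨?_, ?_⟩ _ _ fun _ => rfl).symm
  · rintro ⟨i, c⟩ ⟨j, d⟩ h
    simp only [cons, Composition.ext_iff, List.cons.injEq, add_left_inj] at h
    obtain ⟨hij, hcd⟩ := h
    obtain rfl : i = j := Fin.ext hij
    obtain rfl : c = d := Composition.ext hcd
    rfl
  · intro c
    obtain ⟨blocks, blocks_pos, blocks_sum⟩ := c
    rcases blocks with _ | ⟨b, l⟩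
    · simp at blocks_sum
    have hb : 1 ≤ b := blocks_pos (by simp)
    simp only [List.sum_cons] at blocks_sum
    refine ⟨⟨⟨b - 1, by omega⟩, ⟨l, fun h => blocks_pos (by simp [h]), by simp only; omega⟩⟩, ?_⟩
    refine Composition.ext ?_
    simp only [cons, List.cons.injEq, and_true]
    omega

/-- The ballot numbers `a / (2n + a) * (2n + a).choose n`. -/
noncomputable def ballot (a n : ℕ) : ℕ := coeff n (catalanSeries ^ a)

@[simp] theorem ballot_zero_right (a : ℕ) : ballot a 0 = 1 := by
  simp [ballot, coeff_zero_eq_constantCoeff]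

@[simp] theorem ballot_zero_succ (n : ℕ) : ballot 0 (n + 1) = 0 := by
  simp [ballot, coeff_one]

theorem ballot_one (n : ℕ) : ballot 1 n = catalan n := by
  simp [ballot]

theorem ballot_succ_succ (a n : ℕ) :
    ballot (a + 1) (n + 1) = ballot a (n + 1) + ballot (a + 2) n := by
  have h : catalanSeries ^ (a + 1) = catalanSeries ^ (a + 2) * X + catalanSeries ^ a := by
    rw [pow_succ]
    nth_rw 2 [← catalanSeries_sq_mul_X_add_one]
    ring
  simp [ballot, h, coeff_succ_mul_X, add_comm]

theorem sum_range_choose_succ_mul (a n : ℕ) (g : ℕ → ℕ) :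
    ∑ c ∈ range (n + 2), (a + 1 + c).choose c * g c =
      ∑ c ∈ range (n + 2), (a + c).choose c * g c +
        ∑ c ∈ range (n + 1), (a + 1 + c).choose c * g (c + 1) := by
  rw [sum_range_succ' _ (n + 1), sum_range_succ' (fun c => (a + c).choose c * g c)]
  have pascal : ∀ c, (a + 1 + (c + 1)).choose (c + 1) =
      (a + 1 + c).choose c + (a + (c + 1)).choose (c + 1) := fun c => by
    rw [show a + 1 + (c + 1) = a + 1 + c + 1 by ring, Nat.choose_succ_succ',
      show a + 1 + c = a + (c + 1) by ring]
  simp only [pascal, add_mul, sum_add_distrib, Nat.choose_zero_right]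
  ring

/-- Coefficient of `Xⁿ` in `C ^ k * (1 - X * C) ^ (-(a + 1)) = C ^ (a + k + 1)`, as
`1 / (1 - X * C) = C`; the offset `k` makes the induction go through. -/
theorem sum_choose_mul_ballot (n a k : ℕ) :
    ∑ c ∈ range (n + 1), (a + c).choose c * ballot (c + k) (n - c) = ballot (a + k + 1) n := by
  induction n generalizing a k with
  | zero => simp
  | succ n ihn =>
    have shift : ∀ c, ballot (c + 1 + k) (n + 1 - (c + 1)) = ballot (c + (k + 1)) (n - c) :=
      fun c => by rw [Nat.add_sub_add_right, add_right_comm, add_assoc]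
    induction a with
    | zero =>
      have := ihn 0 (k + 1)
      simp only [zero_add, Nat.choose_self, one_mul] at this ⊢
      rw [sum_range_succ']
      simp only [shift, this, Nat.sub_zero, zero_add]
      rw [ballot_succ_succ k]
      ring
    | succ a iha =>
      rw [sum_range_choose_succ_mul, iha]
      simp only [shift, ihn, show a + 1 + k + 1 = a + k + 1 + 1 by ring, ballot_succ_succ]
      ring_nf

theorem ballot_succ_eq_sum (a n : ℕ) :
    ballot a (n + 1) = ∑ i ∈ range (n + 1), (a + i).choose (i + 1) * ballot (i + 1) (n - i) := by
  cases a with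
  | zero => simp
  | succ a =>
    have := sum_choose_mul_ballot (n + 1) a 0
    rw [sum_range_succ'] at this
    simpa [add_right_comm a 1, add_assoc] using this.symm

def betaSum (a n : ℕ) : ℕ := ∑ c : Composition n, betaComp (a :: c.blocks)

theorem betaSum_zero_right (a : ℕ) : betaSum a 0 = 1 := by
  have blocks_eq_nil (c : Composition 0) : c.blocks = [] := c.blocks_eq_nil.2 rfl
  simp [betaSum, blocks_eq_nil, betaComp, composition_card]

theorem betaSum_succ (a n : ℕ) :
    betaSum a (n + 1) = ∑ i ∈ range (n + 1), (a + i).choose (i + 1) * betaSum (i + 1) (n - i) := by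
  rw [betaSum, Composition.sum_blocks_succ n (fun l => betaComp (a :: l))]
  simp [betaSum, betaComp, mul_sum]

theorem betaSum_eq_ballot (a n : ℕ) : betaSum a n = ballot a n := by
  induction n using Nat.strong_induction_on generalizing a with
  | _ n ih =>
    cases n with
    | zero => rw [betaSum_zero_right, ballot_zero_right]
    | succ n =>
      rw [betaSum_succ, ballot_succ_eq_sum]
      exact sum_congr rfl fun i _ => by rw [ih (n - i) (by omega)]

theorem betaComp_one_cons (l : List ℕ) : betaComp (1 :: l) = betaComp l := by
  cases l <;> simp [betaComp]

theorem sum_beta_over_compositions_general (N : ℕ) :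
    (∑ m : Composition N, (betaComp m.blocks : ℚ))
      = (Nat.choose (2 * N) N : ℚ) / (N + 1) ∧
    ∑ m : Composition N, betaComp m.blocks = catalan N := by
  have hnat : ∑ m : Composition N, betaComp m.blocks = catalan N := by
    rw [← ballot_one, ← betaSum_eq_ballot, betaSum]
    simp only [betaComp_one_cons]
  refine ⟨?_, hnat⟩
  rw [← Nat.cast_sum, hnat, eq_div_iff (by positivity), ← Nat.centralBinom_eq_two_mul_choose]
  exact_mod_cast (mul_comm _ _).trans (succ_mul_catalan_eq_centralBinom N)

/-- For every positive integer `N`, the sum of `β(m)` over all compositions `m` of `N`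
equals the Catalan number `C_N = (1/(N+1))·C(2N,N)`. -/
theorem sum_beta_over_compositions (N : ℕ) (hN : 1 ≤ N) :
    (∑ m : Composition N, (betaComp m.blocks : ℚ))
      = (Nat.choose (2 * N) N : ℚ) / (N + 1) ∧
    ∑ m : Composition N, betaComp m.blocks = catalan N :=
  sum_beta_over_compositions_general N
end

section
/- For every composition m = (m₁,…,m_ℓ) of N = |m|, the number of Dyck paths of length 2N which take exactly 2m_j steps at level j for each j = 1,…,ℓ (i.e., lattice loops based at 1 in {1,…,ℓ+1} traversing the edge (j, j+1) exactly 2m_j times) equals β(m) = ∏_{j=1}^{ℓ-1} C(m_j + m_{j+1} - 1, m_{j+1}). -/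
/-- `π` is a loop of length `2N` in the lattice `Λ_n = {1,…,n}`; we normalize `π j = 0`
outside the domain `{0,…,2N}` so that the collection of loops is an honest set of maps. -/
def IsLoop (n N : ℕ) (π : ℕ → ℕ) : Prop :=
  (∀ j, 2 * N < j → π j = 0) ∧
  (∀ j, j ≤ 2 * N → 1 ≤ π j ∧ π j ≤ n) ∧
  π 0 = π (2 * N) ∧
  ∀ j, j < 2 * N → (π (j + 1) = π j + 1 ∨ π j = π (j + 1) + 1)

/-- The number of times the loop `π` (of length `2N`) traverses the edge `(v, v+1)`,
counting both directions. -/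
def edgeCount (N : ℕ) (π : ℕ → ℕ) (v : ℕ) : ℕ :=
  ((Finset.range (2 * N)).filter
    (fun j => (π j = v ∧ π (j + 1) = v + 1) ∨ (π j = v + 1 ∧ π (j + 1) = v))).card

/-- `π` traverses each edge `(v, v+1)`, `1 ≤ v ≤ ℓ`, exactly `2·m_v` times, where the
`m_v` are the parts of the list `l`. -/
def Traverses (N : ℕ) (l : List ℕ) (π : ℕ → ℕ) : Prop :=
  ∀ v, 1 ≤ v → v ≤ l.length → edgeCount N π v = 2 * l.getD (v - 1) 0

namespace LatticeLoop

def IsStep (x y : ℕ) : Prop := y = x + 1 ∨ x = y + 1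

def Crosses (v x y : ℕ) : Prop := (x = v ∧ y = v + 1) ∨ (x = v + 1 ∧ y = v)

instance (v x y : ℕ) : Decidable (Crosses v x y) := by unfold Crosses; infer_instance

lemma crosses_left_iff (v x : ℕ) : Crosses v x (x + 1) ↔ v = x := by unfold Crosses; omega

lemma crosses_right_iff (v x : ℕ) : Crosses v (x + 1) x ↔ v = x := by unfold Crosses; omega

def traversals (v : ℕ) : List ℕ → ℕ
  | x :: y :: r => (if Crosses v x y then 1 else 0) + traversals v (y :: r)
  | _ => 0

lemma traversals_cons_cons (v x y : ℕ) (r : List ℕ) :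
    traversals v (x :: y :: r) = (if Crosses v x y then 1 else 0) + traversals v (y :: r) := rfl

lemma traversals_cons (v x : ℕ) (L : List ℕ) :
    traversals v (x :: L) = (L.head?.elim 0 fun y => if Crosses v x y then 1 else 0) +
      traversals v L := by
  cases L <;> simp [traversals]

lemma traversals_eq_zero_of_not_mem {v : ℕ} : ∀ {h : List ℕ}, v + 1 ∉ h → traversals v h = 0
  | [], _ | [_], _ => rfl
  | x :: y :: r, hv => by
    simp only [List.mem_cons, not_or] at hv
    rw [traversals_cons_cons, traversals_eq_zero_of_not_mem (by simp [hv.2.1, hv.2.2]),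
      if_neg (by unfold Crosses; omega)]

lemma traversals_map_range' (π : ℕ → ℕ) (v : ℕ) : ∀ k s : ℕ,
    traversals v ((List.range' s (k + 1)).map π) =
      ∑ j ∈ Finset.range k, if Crosses v (π (s + j)) (π (s + j + 1)) then 1 else 0
  | 0, s => rfl
  | k + 1, s => by
    rw [List.range'_succ, List.map_cons, List.range'_succ, List.map_cons, traversals_cons_cons,
      ← List.map_cons, ← List.range'_succ, traversals_map_range' π v k (s + 1),
      Finset.sum_range_succ', add_comm]
    simp only [add_assoc, add_comm 1, add_zero]

lemma edgeCount_eq_traversals (N : ℕ) (π : ℕ → ℕ) (v : ℕ) :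
    edgeCount N π v = traversals v ((List.range (2 * N + 1)).map π) := by
  rw [List.range_eq_range', traversals_map_range', edgeCount, Finset.card_filter]
  simp only [zero_add]
  rfl

def peaks (t : ℕ) : ℕ → List ℕ
  | 0 => []
  | c + 1 => (t + 1) :: t :: peaks t c

section peaks

variable {t : ℕ}

lemma mem_peaks {c x : ℕ} (hx : x ∈ peaks t c) : x = t + 1 ∨ x = t := by
  induction c with
  | zero => simp [peaks] at hx
  | succ c ih =>
    simp only [peaks, List.mem_cons] at hx
    rcases hx with hx | hx | hx
    exacts [Or.inl hx, Or.inr hx, ih hx]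

lemma length_peaks (c : ℕ) : (peaks t c).length = 2 * c := by
  induction c with
  | zero => rfl
  | succ c ih => rw [peaks, List.length_cons, List.length_cons, ih]; ring

lemma isChain_cons_peaks_append (c : ℕ) (W : List ℕ) :
    (t :: (peaks t c ++ W)).IsChain IsStep ↔ (t :: W).IsChain IsStep := by
  induction c with
  | zero => simp [peaks]
  | succ c ih =>
    simp only [peaks, List.cons_append, List.isChain_cons_cons, ih]
    simp [IsStep]

lemma getLast?_cons_peaks_append (c : ℕ) (W : List ℕ) :
    (t :: (peaks t c ++ W)).getLast? = (t :: W).getLast? := by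
  induction c with
  | zero => simp [peaks]
  | succ c ih => simpa [peaks] using ih

lemma traversals_cons_peaks_append (v c : ℕ) (W : List ℕ) :
    traversals v (t :: (peaks t c ++ W)) = (if v = t then 2 * c else 0) + traversals v (t :: W) := by
  induction c with
  | zero => simp [peaks]
  | succ c ih =>
    simp only [peaks, List.cons_append, traversals_cons_cons, crosses_left_iff,
      crosses_right_iff] at ih ⊢
    rw [ih]
    split_ifs <;> omega

end peaks

/-- Inserts `peaks t c` after the `i`-th visit of `h` to `t`, where `c` is the `i`-th entry
of `cs` (missing entries count as `0`). -/
def insertPeaks (t : ℕ) : List ℕ → List ℕ → List ℕ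
  | _, [] => []
  | cs, x :: r =>
    if x = t then x :: (peaks t (cs.headD 0) ++ insertPeaks t cs.tail r)
    else x :: insertPeaks t cs r

section insertPeaks

variable {t : ℕ}

lemma insertPeaks_cons_self (cs r : List ℕ) :
    insertPeaks t cs (t :: r) = t :: (peaks t (cs.headD 0) ++ insertPeaks t cs.tail r) := by
  simp [insertPeaks]

lemma insertPeaks_cons_of_ne (cs r : List ℕ) {x : ℕ} (hx : x ≠ t) :
    insertPeaks t cs (x :: r) = x :: insertPeaks t cs r := by
  simp [insertPeaks, hx]

lemma head?_insertPeaks (cs h : List ℕ) : (insertPeaks t cs h).head? = h.head? := by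
  cases h with
  | nil => rfl
  | cons x r => by_cases hx : x = t <;> simp [insertPeaks, hx]

lemma getLast?_insertPeaks (cs h : List ℕ) : (insertPeaks t cs h).getLast? = h.getLast? := by
  induction h generalizing cs with
  | nil => rfl
  | cons x r ih =>
    by_cases hx : x = t
    · subst hx
      rw [insertPeaks_cons_self, getLast?_cons_peaks_append, List.getLast?_cons,
        List.getLast?_cons, ih]
    · rw [insertPeaks_cons_of_ne _ _ hx, List.getLast?_cons, List.getLast?_cons, ih]

lemma mem_insertPeaks {cs h : List ℕ} {y : ℕ} (hy : y ∈ insertPeaks t cs h) :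
    y ∈ h ∨ y = t + 1 := by
  induction h generalizing cs with
  | nil => simp [insertPeaks] at hy
  | cons x r ih =>
    by_cases hx : x = t
    · subst hx
      rw [insertPeaks_cons_self] at hy
      simp only [List.mem_cons, List.mem_append] at hy
      rcases hy with rfl | hy | hy
      · simp
      · rcases mem_peaks hy with h | h <;> simp [h]
      · rcases ih hy with hy | hy <;> simp [hy]
    · rw [insertPeaks_cons_of_ne _ _ hx] at hy
      rcases List.mem_cons.1 hy with rfl | hy
      · simp
      · rcases ih hy with hy | hy <;> simp [hy]

lemma isChain_insertPeaks (cs : List ℕ) {h : List ℕ} (hh : h.IsChain IsStep) :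
    (insertPeaks t cs h).IsChain IsStep := by
  induction h generalizing cs with
  | nil => exact List.isChain_nil
  | cons x r ih =>
    rw [List.isChain_cons] at hh
    by_cases hxt : x = t
    · subst hxt
      rw [insertPeaks_cons_self, isChain_cons_peaks_append]
      exact (ih _ hh.2).cons (by simpa only [head?_insertPeaks] using hh.1)
    · rw [insertPeaks_cons_of_ne _ _ hxt]
      exact (ih _ hh.2).cons (by simpa only [head?_insertPeaks] using hh.1)

lemma traversals_insertPeaks (v : ℕ) {cs h : List ℕ} (hcs : h.count t = cs.length) :
    traversals v (insertPeaks t cs h) = traversals v h + if v = t then 2 * cs.sum else 0 := by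
  induction h generalizing cs with
  | nil => simp_all [insertPeaks, eq_comm (a := 0)]
  | cons x r ih =>
    by_cases hxt : x = t
    · subst hxt
      obtain ⟨c, cs, rfl⟩ := List.exists_cons_of_length_pos (l := cs) (by simp at hcs; omega)
      rw [insertPeaks_cons_self, traversals_cons_peaks_append, traversals_cons, head?_insertPeaks,
        ih (by simpa using hcs), traversals_cons v x r]
      simp only [List.headD, List.tail_cons, List.sum_cons]
      split_ifs <;> ring
    · rw [insertPeaks_cons_of_ne _ _ hxt, traversals_cons, head?_insertPeaks,
        ih (by simpa [List.count_cons, hxt] using hcs), traversals_cons v x r]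
      ring

lemma length_insertPeaks {cs h : List ℕ} (hcs : h.count t = cs.length) :
    (insertPeaks t cs h).length = h.length + 2 * cs.sum := by
  induction h generalizing cs with
  | nil => simp_all [insertPeaks, eq_comm (a := 0)]
  | cons x r ih =>
    by_cases hxt : x = t
    · subst hxt
      obtain ⟨c, cs, rfl⟩ := List.exists_cons_of_length_pos (l := cs) (by simp at hcs; omega)
      rw [insertPeaks_cons_self, List.length_cons, List.length_append, length_peaks,
        ih (by simpa using hcs), List.length_cons, List.headD_cons, List.tail_cons, List.sum_cons]
      ring
    · rw [insertPeaks_cons_of_ne _ _ hxt, List.length_cons, List.length_cons,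
        ih (by simpa [List.count_cons, hxt] using hcs)]
      ring

end insertPeaks

def erasePeaks (t : ℕ) : List ℕ → List ℕ
  | x :: y :: r => if x = t + 1 then erasePeaks t r else x :: erasePeaks t (y :: r)
  | h => h

/-- The number of peaks `t, t+1, t` following each visit of `h` to `t` that is not itself the
return from a peak; the inverse of `insertPeaks`. -/
def peakCounts (t : ℕ) : List ℕ → List ℕ
  | x :: y :: r =>
    if x = t then
      if y = t + 1 then (peakCounts t r).modifyHead (· + 1) else 0 :: peakCounts t (y :: r)
    else peakCounts t (y :: r)
  | [x] => if x = t then [0] else []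
  | [] => []

section erasePeaks

variable {t : ℕ}

lemma erasePeaks_cons_of_ne {x : ℕ} (hx : x ≠ t + 1) (L : List ℕ) :
    erasePeaks t (x :: L) = x :: erasePeaks t L := by
  cases L <;> simp [erasePeaks, hx]

lemma head?_erasePeaks {h : List ℕ} (hh : h.head? ≠ some (t + 1)) :
    (erasePeaks t h).head? = h.head? := by
  cases h with
  | nil => rfl
  | cons x r => rw [erasePeaks_cons_of_ne (by simpa using hh)]; rfl

lemma erasePeaks_cons_peak (r : List ℕ) :
    erasePeaks t (t :: (t + 1) :: t :: r) = erasePeaks t (t :: r) := by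
  rw [erasePeaks_cons_of_ne (x := t) (by omega), erasePeaks_cons_of_ne (x := t) (by omega)]
  simp [erasePeaks]

lemma erasePeaks_sublist (h : List ℕ) : (erasePeaks t h).Sublist h := by
  fun_induction erasePeaks t h <;> simp_all [List.Sublist.cons]

lemma erasePeaks_peaks_append (c : ℕ) (W : List ℕ) :
    erasePeaks t (peaks t c ++ W) = erasePeaks t W := by
  induction c with
  | zero => rfl
  | succ c ih => simpa [peaks, erasePeaks] using ih

lemma erasePeaks_insertPeaks (cs : List ℕ) {h : List ℕ} (hh : t + 1 ∉ h) :
    erasePeaks t (insertPeaks t cs h) = h := by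
  induction h generalizing cs with
  | nil => rfl
  | cons x r ih =>
    simp only [List.mem_cons, not_or] at hh
    by_cases hxt : x = t
    · subst hxt
      rw [insertPeaks_cons_self, erasePeaks_cons_of_ne (by omega), erasePeaks_peaks_append,
        ih _ hh.2]
    · rw [insertPeaks_cons_of_ne _ _ hxt, erasePeaks_cons_of_ne (Ne.symm hh.1), ih _ hh.2]

lemma peakCounts_cons_of_ne {x : ℕ} (hx : x ≠ t) (L : List ℕ) :
    peakCounts t (x :: L) = peakCounts t L := by
  cases L <;> simp [peakCounts, hx]

lemma peakCounts_cons_self {L : List ℕ} (hL : L.head? ≠ some (t + 1)) :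
    peakCounts t (t :: L) = 0 :: peakCounts t L := by
  cases L with
  | nil => simp [peakCounts]
  | cons y r => simp_all [peakCounts]

lemma peakCounts_cons_peak (r : List ℕ) :
    peakCounts t (t :: (t + 1) :: t :: r) = (peakCounts t (t :: r)).modifyHead (· + 1) := by
  simp [peakCounts]

lemma peakCounts_cons_peaks_append (c : ℕ) (W : List ℕ) :
    peakCounts t (t :: (peaks t c ++ W)) = (peakCounts t (t :: W)).modifyHead (· + c) := by
  induction c with
  | zero =>
    simp only [peaks, List.nil_append, Nat.add_zero]
    exact (congrFun List.modifyHead_id _).symm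
  | succ c ih =>
    simp only [peaks, List.cons_append, peakCounts, if_true, ih, List.modifyHead_modifyHead]
    congr 2

lemma peakCounts_insertPeaks {cs h : List ℕ} (hh : t + 1 ∉ h) (hcs : h.count t = cs.length) :
    peakCounts t (insertPeaks t cs h) = cs := by
  induction h generalizing cs with
  | nil => simp_all [insertPeaks, peakCounts, eq_comm (a := 0)]
  | cons x r ih =>
    simp only [List.mem_cons, not_or] at hh
    by_cases hxt : x = t
    · subst hxt
      obtain ⟨c, cs, rfl⟩ := List.exists_cons_of_length_pos (l := cs) (by simp at hcs; omega)
      have hhead : (insertPeaks x cs r).head? ≠ some (x + 1) := by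
        rw [head?_insertPeaks]
        cases r with
        | nil => simp
        | cons y r =>
          simp only [List.head?_cons, ne_eq, Option.some.injEq]
          rintro rfl
          exact hh.2 List.mem_cons_self
      rw [insertPeaks_cons_self, List.headD_cons, List.tail_cons, peakCounts_cons_peaks_append,
        peakCounts_cons_self hhead, ih hh.2 (by simpa using hcs)]
      simp
    · rw [insertPeaks_cons_of_ne _ _ hxt, peakCounts_cons_of_ne hxt,
        ih hh.2 (by simpa [List.count_cons, hxt] using hcs)]

end erasePeaks

/-- `h` is a lattice path whose visits to `t + 1` are isolated peaks `t, t+1, t`. -/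
inductive PeakedAt (t : ℕ) : List ℕ → Prop
  | nil : PeakedAt t []
  | singleton {x : ℕ} : x ≠ t + 1 → PeakedAt t [x]
  | cons {x y : ℕ} {r : List ℕ} :
      x ≠ t + 1 → y ≠ t + 1 → IsStep x y → PeakedAt t (y :: r) → PeakedAt t (x :: y :: r)
  | peak {r : List ℕ} : PeakedAt t (t :: r) → PeakedAt t (t :: (t + 1) :: t :: r)

namespace PeakedAt

variable {t : ℕ}

theorem of_isChain : ∀ {h : List ℕ}, h.IsChain IsStep → (∀ x ∈ h, x ≤ t + 1) →
    h.head? ≠ some (t + 1) → h.getLast? ≠ some (t + 1) → PeakedAt t h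
  | [], _, _, _, _ => .nil
  | [_], _, _, hh, _ => .singleton (by simpa using hh)
  | x :: y :: r, hc, hb, hh, hl => by
    have hx : x ≠ t + 1 := by simpa using hh
    rw [List.isChain_cons_cons] at hc
    by_cases hy : y = t + 1
    · subst hy
      obtain rfl : t = x := by have := hb x (by simp); unfold IsStep at hc; omega
      cases r with
      | nil => simp at hl
      | cons z r =>
        rw [List.isChain_cons_cons] at hc
        obtain rfl : t = z := by have := hb z (by simp); unfold IsStep at hc; omega
        refine .peak (of_isChain hc.2.2 (fun w hw => hb w ?_) (by simp) (by simpa using hl))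
        simp only [List.mem_cons] at hw ⊢
        tauto
    · exact .cons hx hy hc.1 (of_isChain hc.2 (fun w hw => hb w (List.mem_cons_of_mem _ hw))
        (by simpa using hy) (by simpa using hl))
  termination_by h => h.length

theorem isChain_erasePeaks {h : List ℕ} (hp : PeakedAt t h) :
    (erasePeaks t h).IsChain IsStep := by
  induction hp with
  | nil => exact List.isChain_nil
  | singleton => exact List.isChain_singleton _
  | @cons x y r hx hy hxy _ ih =>
    rw [erasePeaks_cons_of_ne hx]
    refine ih.cons ?_
    rw [erasePeaks_cons_of_ne hy]
    simpa using hxy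
  | peak _ ih => rwa [erasePeaks_cons_peak]

theorem getLast?_erasePeaks {h : List ℕ} (hp : PeakedAt t h) :
    (erasePeaks t h).getLast? = h.getLast? := by
  induction hp with
  | nil => rfl
  | singleton => rfl
  | cons hx _ _ _ ih => simp [erasePeaks_cons_of_ne hx, List.getLast?_cons, ih]
  | peak _ ih => rw [erasePeaks_cons_peak, ih, List.getLast?_cons_cons, List.getLast?_cons_cons]

theorem not_mem_erasePeaks {h : List ℕ} (hp : PeakedAt t h) : t + 1 ∉ erasePeaks t h := by
  induction hp with
  | nil => simp [erasePeaks]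
  | singleton hx => simpa [erasePeaks] using Ne.symm hx
  | cons hx _ _ _ ih => simpa [erasePeaks_cons_of_ne hx, Ne.symm hx] using ih
  | peak _ ih => rwa [erasePeaks_cons_peak]

theorem traversals_erasePeaks (v : ℕ) {h : List ℕ} (hp : PeakedAt t h) :
    traversals v h = traversals v (erasePeaks t h) + if v = t then 2 * h.count (t + 1) else 0 := by
  induction hp with
  | nil => simp [traversals, erasePeaks]
  | singleton hx => simp [traversals, erasePeaks, hx]
  | @cons x y r hx hy _ _ ih =>
    rw [erasePeaks_cons_of_ne hx, traversals_cons_cons, ih, traversals_cons v x,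
      List.count_cons_of_ne hx, erasePeaks_cons_of_ne hy (L := r)]
    simp only [List.head?_cons, Option.elim_some]
    ring
  | peak _ ih =>
    rw [erasePeaks_cons_peak, traversals_cons_cons, traversals_cons_cons, ih]
    simp only [List.count_cons_self, List.count_cons_of_ne (show t ≠ t + 1 by omega),
      crosses_left_iff, crosses_right_iff]
    split_ifs <;> omega

theorem traversals_self {h : List ℕ} (hp : PeakedAt t h) : traversals t h = 2 * h.count (t + 1) := by
  rw [hp.traversals_erasePeaks t, traversals_eq_zero_of_not_mem hp.not_mem_erasePeaks, if_pos rfl,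
    zero_add]

theorem length_peakCounts {h : List ℕ} (hp : PeakedAt t h) :
    (peakCounts t h).length = (erasePeaks t h).count t := by
  induction hp with
  | nil => rfl
  | @singleton x hx => by_cases hxt : x = t <;> simp [peakCounts, erasePeaks, hxt]
  | @cons x y r hx hy _ _ ih =>
    rw [erasePeaks_cons_of_ne hx]
    by_cases hxt : x = t
    · subst hxt
      rw [peakCounts_cons_self (by simpa using hy), List.length_cons, ih, List.count_cons_self]
    · rw [peakCounts_cons_of_ne hxt, ih, List.count_cons_of_ne hxt]
  | peak _ ih => rw [peakCounts_cons_peak, List.length_modifyHead, ih, erasePeaks_cons_peak]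

theorem peakCounts_ne_nil {r : List ℕ} (hp : PeakedAt t (t :: r)) : peakCounts t (t :: r) ≠ [] := by
  rw [← List.length_pos_iff, hp.length_peakCounts, erasePeaks_cons_of_ne (by omega)]
  simp

theorem sum_peakCounts {h : List ℕ} (hp : PeakedAt t h) : (peakCounts t h).sum = h.count (t + 1) := by
  induction hp with
  | nil => rfl
  | @singleton x hx => by_cases hxt : x = t <;> simp [peakCounts, hxt, hx]
  | @cons x y r hx hy _ _ ih =>
    rw [List.count_cons_of_ne hx, ← ih]
    by_cases hxt : x = t
    · subst hxt
      rw [peakCounts_cons_self (by simpa using hy), List.sum_cons, zero_add]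
    · rw [peakCounts_cons_of_ne hxt]
  | peak hp ih =>
    obtain ⟨c, cs, hcs⟩ := List.exists_cons_of_ne_nil hp.peakCounts_ne_nil
    rw [hcs] at ih
    simp [peakCounts_cons_peak, hcs, ← ih, add_right_comm]

theorem insertPeaks_peakCounts {h : List ℕ} (hp : PeakedAt t h) :
    insertPeaks t (peakCounts t h) (erasePeaks t h) = h := by
  induction hp with
  | nil => rfl
  | @singleton x hx => by_cases hxt : x = t <;> simp [peakCounts, erasePeaks, insertPeaks, hxt, peaks]
  | @cons x y r hx hy _ _ ih =>
    rw [erasePeaks_cons_of_ne hx]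
    by_cases hxt : x = t
    · subst hxt
      rw [peakCounts_cons_self (by simpa using hy), insertPeaks_cons_self]
      simpa [peaks] using ih
    · rw [peakCounts_cons_of_ne hxt, insertPeaks_cons_of_ne _ _ hxt, ih]
  | peak hp ih =>
    obtain ⟨c, cs, hcs⟩ := List.exists_cons_of_ne_nil hp.peakCounts_ne_nil
    rw [hcs, erasePeaks_cons_of_ne (by omega), insertPeaks_cons_self] at ih
    rw [peakCounts_cons_peak, hcs, erasePeaks_cons_peak, erasePeaks_cons_of_ne (by omega),
      List.modifyHead_cons, insertPeaks_cons_self]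
    simpa [peaks] using ih

end PeakedAt

/-- Vertex sequences of the loops of `Ω₁(m)`, where the list `ms` is `m`. -/
structure IsSpecLoop (ms h : List ℕ) : Prop where
  isChain : h.IsChain IsStep
  mem_bounds : ∀ x ∈ h, 1 ≤ x ∧ x ≤ ms.length + 1
  head? : h.head? = some 1
  getLast? : h.getLast? = some 1
  traversals : ∀ i (hi : i < ms.length), traversals (i + 1) h = 2 * ms[i]

namespace IsSpecLoop

lemma nil_iff {h : List ℕ} : IsSpecLoop [] h ↔ h = [1] := by
  refine ⟨fun hh => ?_, fun hh => ⟨?_, ?_, ?_, ?_, ?_⟩⟩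
  · obtain ⟨r, rfl⟩ : ∃ r, h = 1 :: r := by
      cases h with
      | nil => simpa using hh.head?
      | cons x r => exact ⟨r, by simpa using hh.head?⟩
    cases r with
    | nil => rfl
    | cons y r =>
      have hy := hh.mem_bounds y (by simp)
      have := (List.isChain_cons_cons.1 hh.isChain).1
      simp only [List.length_nil, IsStep] at hy this
      omega
  all_goals simp [hh]

lemma peakedAt {ms h : List ℕ} {a : ℕ} (hh : IsSpecLoop (ms ++ [a]) h) :
    PeakedAt (ms.length + 1) h := by
  refine .of_isChain hh.isChain (fun x hx => by simpa using (hh.mem_bounds x hx).2) ?_ ?_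
  · rw [hh.head?]; simp
  · rw [hh.getLast?]; simp

/-- The default `1` is the number of visits of the one-vertex loop `[1]` of `Ω₁()` to its top. -/
lemma count_top {ms h : List ℕ} (hh : IsSpecLoop ms h) : h.count (ms.length + 1) = ms.getLastD 1 := by
  induction ms using List.reverseRecOn with
  | nil => simp [nil_iff.1 hh]
  | append_singleton ms a _ =>
    have := hh.traversals ms.length (by simp)
    rw [hh.peakedAt.traversals_self] at this
    simpa using this

lemma erasePeaks {ms h : List ℕ} {a : ℕ} (hh : IsSpecLoop (ms ++ [a]) h) :
    IsSpecLoop ms (erasePeaks (ms.length + 1) h) where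
  isChain := hh.peakedAt.isChain_erasePeaks
  mem_bounds x hx := by
    have hb := hh.mem_bounds x ((erasePeaks_sublist h).subset hx)
    have hne : x ≠ ms.length + 1 + 1 := fun e => hh.peakedAt.not_mem_erasePeaks (e ▸ hx)
    simp only [List.length_append, List.length_singleton] at hb
    omega
  head? := by rw [head?_erasePeaks (by rw [hh.head?]; simp), hh.head?]
  getLast? := by rw [hh.peakedAt.getLast?_erasePeaks, hh.getLast?]
  traversals i hi := by
    have := hh.traversals i (by simp; omega)
    rw [hh.peakedAt.traversals_erasePeaks, if_neg (by omega)] at this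
    simpa [List.getElem_append_left hi] using this

lemma insertPeaks {ms h cs : List ℕ} {a : ℕ} (hh : IsSpecLoop ms h)
    (hlen : cs.length = ms.getLastD 1) (hsum : cs.sum = a) :
    IsSpecLoop (ms ++ [a]) (insertPeaks (ms.length + 1) cs h) where
  isChain := isChain_insertPeaks cs hh.isChain
  mem_bounds x hx := by
    simp only [List.length_append, List.length_singleton]
    rcases mem_insertPeaks hx with hx | rfl
    · have := hh.mem_bounds x hx
      omega
    · omega
  head? := by rw [head?_insertPeaks, hh.head?]
  getLast? := by rw [getLast?_insertPeaks, hh.getLast?]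
  traversals i hi := by
    rw [traversals_insertPeaks _ (hh.count_top.trans hlen.symm), hsum]
    simp only [List.length_append, List.length_singleton] at hi
    rcases Nat.lt_succ_iff_lt_or_eq.1 hi with hi | rfl
    · rw [hh.traversals i hi, if_neg (by omega), List.getElem_append_left hi, add_zero]
    · have hno : ms.length + 1 + 1 ∉ h := fun hm => by have := hh.mem_bounds _ hm; omega
      rw [traversals_eq_zero_of_not_mem hno, if_pos rfl]
      simp

lemma length_eq {ms h : List ℕ} (hh : IsSpecLoop ms h) : h.length = 2 * ms.sum + 1 := by
  induction ms using List.reverseRecOn generalizing h with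
  | nil => simp [nil_iff.1 hh]
  | append_singleton ms a ih =>
    have hp := hh.peakedAt
    rw [← hp.insertPeaks_peakCounts, length_insertPeaks hp.length_peakCounts.symm,
      ih hh.erasePeaks, hp.sum_peakCounts]
    have := hh.count_top
    simp only [List.length_append, List.length_singleton, List.getLastD_concat] at this
    rw [this, List.sum_append, List.sum_singleton]
    ring

end IsSpecLoop

def appendEquiv (ms : List ℕ) (a : ℕ) :
    {h // IsSpecLoop (ms ++ [a]) h} ≃
      {h // IsSpecLoop ms h} × {cs : List ℕ // cs.length = ms.getLastD 1 ∧ cs.sum = a} where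
  toFun h :=
    (⟨erasePeaks _ h, h.2.erasePeaks⟩,
      ⟨peakCounts _ h, by rw [h.2.peakedAt.length_peakCounts, h.2.erasePeaks.count_top],
        by simpa [h.2.peakedAt.sum_peakCounts] using h.2.count_top⟩)
  invFun p := ⟨insertPeaks _ p.2.1 p.1.1, p.1.2.insertPeaks p.2.2.1 p.2.2.2⟩
  left_inv h := Subtype.ext h.2.peakedAt.insertPeaks_peakCounts
  right_inv p := by
    have hno : ms.length + 1 + 1 ∉ p.1.1 := fun hm => by have := p.1.2.mem_bounds _ hm; omega
    exact Prod.ext (Subtype.ext (erasePeaks_insertPeaks _ hno))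
      (Subtype.ext (peakCounts_insertPeaks hno (p.1.2.count_top.trans p.2.2.1.symm)))

theorem card_weakCompositions (b a : ℕ) :
    Nat.card {cs : List ℕ // cs.length = b ∧ cs.sum = a} = (b + a - 1).choose a := by
  let e : {cs : List ℕ // cs.length = b ∧ cs.sum = a} ≃ {P : Fin b → ℕ // ∑ i, P i = a} :=
    { toFun cs := ⟨fun i => cs.1[i.1]'(by rw [cs.2.1]; exact i.2), by
        obtain ⟨l, rfl, rfl⟩ := cs
        exact Fin.sum_univ_getElem l⟩
      invFun P := ⟨List.ofFn P.1, by simp [List.sum_ofFn, P.2]⟩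
      left_inv cs := Subtype.ext (List.ext_getElem (by simp [cs.2.1]) (by simp))
      right_inv P := by ext; simp }
  rw [Nat.card_congr (e.trans (Sym.equivNatSumOfFintype (Fin b) a).symm), Sym.natCard_sym_eq_choose,
    Nat.card_eq_fintype_card, Fintype.card_fin]

theorem betaComp_append (ms : List ℕ) (a : ℕ) :
    betaComp (ms ++ [a]) = betaComp ms * (ms.getLastD 1 + a - 1).choose a := by
  induction ms with
  | nil => simp [betaComp]
  | cons x r ih =>
    cases r with
    | nil => simp [betaComp]
    | cons y r => simp_all [betaComp, mul_assoc]

theorem card_isSpecLoop (ms : List ℕ) : Nat.card {h // IsSpecLoop ms h} = betaComp ms := by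
  induction ms using List.reverseRecOn with
  | nil => simp [IsSpecLoop.nil_iff, betaComp]
  | append_singleton ms a ih =>
    rw [Nat.card_congr (appendEquiv ms a), Nat.card_prod, ih, card_weakCompositions,
      betaComp_append]

lemma isLoop_iff_isSpecLoop {ms : List ℕ} {N : ℕ} {π : ℕ → ℕ} (hπ : ∀ j, 2 * N < j → π j = 0) :
    IsLoop (ms.length + 1) N π ∧ Traverses N ms π ∧ π 0 = 1 ↔
      IsSpecLoop ms ((List.range (2 * N + 1)).map π) := by
  have hchain : ((List.range (2 * N + 1)).map π).IsChain IsStep ↔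
      ∀ j < 2 * N, IsStep (π j) (π (j + 1)) := by
    rw [List.isChain_map, List.isChain_range_succ]
  have hmem : ∀ p : ℕ → Prop, (∀ x ∈ (List.range (2 * N + 1)).map π, p x) ↔
      ∀ j ≤ 2 * N, p (π j) := by
    simp
  have hhead : ((List.range (2 * N + 1)).map π).head? = some (π 0) := by
    simp [List.range_succ_eq_map]
  have hlast : ((List.range (2 * N + 1)).map π).getLast? = some (π (2 * N)) := by
    simp [List.range_succ]
  constructor
  · rintro ⟨⟨-, hb, hcyc, hstep⟩, htrav, h0⟩
    refine ⟨hchain.2 hstep, (hmem _).2 hb, by rw [hhead, h0], by rw [hlast, ← hcyc, h0], ?_⟩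
    intro i hi
    have := htrav (i + 1) (by omega) hi
    rwa [Nat.add_sub_cancel, List.getD_eq_getElem _ _ hi, edgeCount_eq_traversals] at this
  · intro hs
    have h0 : π 0 = 1 := by simpa [hhead] using hs.head?
    refine ⟨⟨hπ, (hmem _).1 hs.mem_bounds, ?_, hchain.1 hs.isChain⟩, ?_, h0⟩
    · simpa [hlast, h0, eq_comm] using hs.getLast?
    · intro v hv1 hv2
      obtain ⟨i, rfl⟩ : ∃ i, v = i + 1 := ⟨v - 1, by omega⟩
      rw [edgeCount_eq_traversals, hs.traversals i hv2, Nat.add_sub_cancel,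
        List.getD_eq_getElem _ _ hv2]

lemma map_range_getD {h : List ℕ} {n : ℕ} (hn : h.length = n) :
    (List.range n).map (fun j => h.getD j 0) = h := by
  subst hn
  exact List.ext_getElem (by simp) fun _ _ hi => by simp [hi]

def loopEquiv {ms : List ℕ} {N : ℕ} (hN : ms.sum = N) :
    {π : ℕ → ℕ // IsLoop (ms.length + 1) N π ∧ Traverses N ms π ∧ π 0 = 1} ≃
      {h // IsSpecLoop ms h} where
  toFun π := ⟨(List.range (2 * N + 1)).map π.1, (isLoop_iff_isSpecLoop π.2.1.1).1 π.2⟩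
  invFun h := ⟨fun j => h.1.getD j 0, by
    have hlen : h.1.length = 2 * N + 1 := hN ▸ h.2.length_eq
    refine (isLoop_iff_isSpecLoop fun j hj => List.getD_eq_default _ _ (by omega)).2 ?_
    rw [map_range_getD hlen]
    exact h.2⟩
  left_inv π := by
    ext j
    show ((List.range (2 * N + 1)).map π.1).getD j 0 = π.1 j
    by_cases hj : j ≤ 2 * N
    · rw [List.getD_eq_getElem _ _ (by simp; omega)]
      simp
    · rw [List.getD_eq_default _ _ (by simp; omega), π.2.1.1 j (by omega)]
  right_inv h := Subtype.ext (map_range_getD (hN ▸ h.2.length_eq))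

end LatticeLoop

theorem card_dyck_paths_with_specification_general (N : ℕ) (m : Composition N) :
    Nat.card {π : ℕ → ℕ //
        IsLoop (m.length + 1) N π ∧ Traverses N m.blocks π ∧ π 0 = 1}
      = betaComp m.blocks := by
  rw [← m.blocks_length, Nat.card_congr (LatticeLoop.loopEquiv m.blocks_sum),
    LatticeLoop.card_isSpecLoop]

/-- For every composition `m = (m₁,…,m_ℓ)` of `N`, the number of Dyck paths of length `2N`
taking exactly `2m_j` steps at level `j` (loops based at `1` in `{1,…,ℓ+1}` traversing
edge `(j,j+1)` exactly `2m_j` times) equals `β(m)`. -/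
theorem card_dyck_paths_with_specification (N : ℕ) (hN : 1 ≤ N) (m : Composition N) :
    Nat.card {π : ℕ → ℕ //
        IsLoop (m.length + 1) N π ∧ Traverses N m.blocks π ∧ π 0 = 1}
      = betaComp m.blocks :=
  card_dyck_paths_with_specification_general N m
end

section
/- For every composition m = (m₁,…,m_ℓ) of N, one has α(m) ≤ (1/N)·N!/(m₁!·m₂!⋯m_ℓ!), with equality if and only if ℓ = 1 or ℓ = 2. -/
def multinomComp (l : List ℕ) : ℚ :=
  (Nat.factorial l.sum : ℚ) / ((l.map Nat.factorial).prod : ℕ)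

/-!
Writing `M(m) = (N-1)!/(m₁!⋯m_ℓ!)` for the right-hand side, peeling off the first part `a` of
`m = a :: m'` (with `m'` starting with `b` and summing to `S ≥ b`) multiplies `α` by
`C(a+b-1, a)` and `M` by `C(a+S-1, a)`. Since binomial coefficients grow with the upper index,
induction gives `α ≤ M`, and the inequality is strict as soon as `S > b`, i.e. `ℓ ≥ 3`.
-/

theorem Nat.choose_lt_choose_of_lt {n m k : ℕ} (hk : k ≠ 0) (hkn : k ≤ n + 1) (h : n < m) :
    n.choose k < m.choose k := by
  obtain ⟨j, rfl⟩ := Nat.exists_eq_add_one_of_ne_zero hk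
  calc n.choose (j + 1) < n.choose j + n.choose (j + 1) :=
        Nat.lt_add_of_pos_left (Nat.choose_pos (by omega))
    _ = (n + 1).choose (j + 1) := (Nat.choose_succ_succ' n j).symm
    _ ≤ m.choose (j + 1) := Nat.choose_le_choose _ h

theorem Nat.add_sub_one_choose_mul_eq {a b : ℕ} (ha : a ≠ 0) (hb : b ≠ 0) :
    (a + b - 1).choose b * b = (a + b - 1).choose a * a := by
  obtain ⟨a, rfl⟩ := Nat.exists_eq_add_one_of_ne_zero ha
  obtain ⟨b, rfl⟩ := Nat.exists_eq_add_one_of_ne_zero hb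
  rw [show a + 1 + (b + 1) - 1 = a + b + 1 by omega, ← Nat.add_one_mul_choose_eq,
    show a + b + 1 = b + a + 1 by omega, ← Nat.add_one_mul_choose_eq, Nat.add_comm b a,
    Nat.choose_symm_add]

theorem alphaComp_singleton (a : ℕ) : alphaComp [a] = 1 / a := by
  simp [alphaComp, betaComp]

theorem alphaComp_cons_cons {a b : ℕ} (ha : a ≠ 0) (hb : b ≠ 0) (l : List ℕ) :
    alphaComp (a :: b :: l) = (a + b - 1).choose a * alphaComp (b :: l) := by
  have hchoose : ((a + b - 1).choose b : ℚ) * b = (a + b - 1).choose a * a := by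
    exact_mod_cast Nat.add_sub_one_choose_mul_eq ha hb
  simp only [alphaComp, betaComp, List.headI_cons, Nat.cast_mul]
  field_simp
  linear_combination (betaComp (b :: l) : ℚ) * hchoose

theorem List.prod_map_factorial_ne_zero (l : List ℕ) : (l.map Nat.factorial).prod ≠ 0 :=
  List.prod_ne_zero (by simp [Nat.factorial_ne_zero])

theorem multinomComp_div_sum {l : List ℕ} (hl : l.sum ≠ 0) :
    multinomComp l / l.sum = (l.sum - 1).factorial / (l.map Nat.factorial).prod := by
  have hfac : (l.sum.factorial : ℚ) = l.sum * (l.sum - 1).factorial := by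
    exact_mod_cast (Nat.mul_factorial_pred hl).symm
  have hP : ((l.map Nat.factorial).prod : ℚ) ≠ 0 := by
    exact_mod_cast List.prod_map_factorial_ne_zero l
  rw [multinomComp, hfac]
  field_simp

theorem multinomComp_div_sum_pos {l : List ℕ} (hl : l.sum ≠ 0) :
    0 < multinomComp l / l.sum := by
  rw [multinomComp_div_sum hl]
  have := List.prod_map_factorial_ne_zero l
  positivity

theorem multinomComp_singleton (a : ℕ) : multinomComp [a] = 1 := by
  simp [multinomComp, Nat.factorial_ne_zero]

theorem multinomComp_cons_div_sum (a : ℕ) {l : List ℕ} (hl : l.sum ≠ 0) :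
    multinomComp (a :: l) / (a :: l).sum
      = (a + l.sum - 1).choose a * (multinomComp l / l.sum) := by
  have hchoose := Nat.add_choose_mul_factorial_mul_factorial (l.sum - 1) a
  rw [show l.sum - 1 + a = a + l.sum - 1 by omega] at hchoose
  have hP : ((l.map Nat.factorial).prod : ℚ) ≠ 0 := by
    exact_mod_cast List.prod_map_factorial_ne_zero l
  rw [multinomComp_div_sum hl, multinomComp_div_sum (by simp only [List.sum_cons]; omega)]
  simp only [List.sum_cons, List.map_cons, List.prod_cons, Nat.cast_mul]
  rw [← hchoose]
  push_cast
  field_simp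

theorem choose_mul_multinomComp_div_sum_le (a : ℕ) {b : ℕ} (hb : b ≠ 0) (l : List ℕ) :
    ((a + b - 1).choose a : ℚ) * (multinomComp (b :: l) / (b :: l).sum)
      ≤ multinomComp (a :: b :: l) / (a :: b :: l).sum := by
  have hsum : (b :: l).sum ≠ 0 := by simp [hb]
  rw [multinomComp_cons_div_sum a hsum]
  gcongr
  · exact (multinomComp_div_sum_pos hsum).le
  · simp

theorem choose_mul_multinomComp_div_sum_lt {a b : ℕ} (ha : a ≠ 0) (hb : b ≠ 0) {l : List ℕ}
    (hl : l.sum ≠ 0) :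
    ((a + b - 1).choose a : ℚ) * (multinomComp (b :: l) / (b :: l).sum)
      < multinomComp (a :: b :: l) / (a :: b :: l).sum := by
  have hsum : (b :: l).sum ≠ 0 := by simp [hb]
  rw [multinomComp_cons_div_sum a hsum]
  gcongr
  · exact multinomComp_div_sum_pos hsum
  · exact Nat.choose_lt_choose_of_lt ha (by omega) (by simp only [List.sum_cons]; omega)

theorem alphaComp_le_multinomComp_div_sum :
    ∀ {l : List ℕ}, (∀ x ∈ l, 0 < x) → alphaComp l ≤ multinomComp l / l.sum
  | [], _ => by simp [alphaComp]
  | [a], _ => by simp [alphaComp_singleton, multinomComp_singleton]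
  | a :: b :: l, hl => by
    have ha : a ≠ 0 := (hl a (by simp)).ne'
    have hb : b ≠ 0 := (hl b (by simp)).ne'
    have ih := alphaComp_le_multinomComp_div_sum (fun x hx => hl x (List.mem_cons_of_mem a hx))
    calc alphaComp (a :: b :: l) = (a + b - 1).choose a * alphaComp (b :: l) :=
          alphaComp_cons_cons ha hb l
      _ ≤ (a + b - 1).choose a * (multinomComp (b :: l) / (b :: l).sum) := by gcongr
      _ ≤ multinomComp (a :: b :: l) / (a :: b :: l).sum :=
          choose_mul_multinomComp_div_sum_le a hb l

theorem alphaComp_eq_multinomComp_div_sum_of_length_le_two {l : List ℕ} (hl : ∀ x ∈ l, 0 < x)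
    (hlen : l.length ≤ 2) : alphaComp l = multinomComp l / l.sum := by
  match l, hlen with
  | [], _ => simp [alphaComp]
  | [a], _ => simp [alphaComp_singleton, multinomComp_singleton]
  | [a, b], _ =>
    have ha : a ≠ 0 := (hl a (by simp)).ne'
    have hb : b ≠ 0 := (hl b (by simp)).ne'
    rw [alphaComp_cons_cons ha hb, multinomComp_cons_div_sum a (by simpa using hb),
      alphaComp_singleton, multinomComp_singleton]
    simp

theorem alphaComp_lt_multinomComp_div_sum_of_three_le_length {l : List ℕ}
    (hl : ∀ x ∈ l, 0 < x) (hlen : 3 ≤ l.length) : alphaComp l < multinomComp l / l.sum := by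
  match l, hlen with
  | a :: b :: c :: l, _ =>
    have ha : a ≠ 0 := (hl a (by simp)).ne'
    have hb : b ≠ 0 := (hl b (by simp)).ne'
    have hc : (c :: l).sum ≠ 0 := by simp [(hl c (by simp)).ne']
    calc alphaComp (a :: b :: c :: l) = (a + b - 1).choose a * alphaComp (b :: c :: l) :=
          alphaComp_cons_cons ha hb _
      _ ≤ (a + b - 1).choose a * (multinomComp (b :: c :: l) / (b :: c :: l).sum) := by
          gcongr
          exact alphaComp_le_multinomComp_div_sum fun x hx => hl x (List.mem_cons_of_mem a hx)
      _ < multinomComp (a :: b :: c :: l) / (a :: b :: c :: l).sum :=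
          choose_mul_multinomComp_div_sum_lt ha hb hc

/-- For every composition `m = (m₁,…,m_ℓ)` of `N ≥ 1`,
`α(m) ≤ (1/N)·N!/(m₁!⋯m_ℓ!)`, with equality iff `ℓ = 1` or `ℓ = 2`. -/
theorem alpha_le_multinomial (N : ℕ) (hN : 1 ≤ N) (m : Composition N) :
    alphaComp m.blocks ≤ multinomComp m.blocks / N ∧
    (alphaComp m.blocks = multinomComp m.blocks / N ↔
      m.blocks.length = 1 ∨ m.blocks.length = 2) := by
  have hpos : ∀ x ∈ m.blocks, 0 < x := fun _ => m.blocks_pos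
  have hlen : 0 < m.blocks.length := m.length_pos_of_pos hN
  have hsum : (N : ℚ) = m.blocks.sum := by rw [m.blocks_sum]
  rw [hsum]
  refine ⟨alphaComp_le_multinomComp_div_sum hpos, fun heq => ?_, fun h =>
    alphaComp_eq_multinomComp_div_sum_of_length_le_two hpos (by omega)⟩
  by_contra h
  exact (alphaComp_lt_multinomComp_div_sum_of_three_le_length hpos (by omega)).ne heq
end

section
/- For complex numbers t₁,…,t_n, the polynomial 𝔉(t₁,…,t_n) equals det(I + T), where T is the n×n matrix with T_{1,2} = t₁, T_{n,n-1} = t_n, and T_{k,k-1} = T_{k,k+1} = t_k for 2 ≤ k ≤ n−1, all other entries zero. -/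
open scoped BigOperators

/-- Index tuples (k₁,…,k_m) with all kᵢ ≥ 1 and k_{i+1} ≥ k_i + 2. -/
def GapTuple (m : ℕ) (k : Fin m → ℕ) : Prop :=
  (∀ i, 1 ≤ k i) ∧ ∀ i j : Fin m, (i : ℕ) + 1 = (j : ℕ) → k i + 2 ≤ k j

/-- The m-th term Σ_{k₁,…,k_m} x_{k₁}x_{k₁+1}⋯x_{k_m}x_{k_m+1} of the series defining 𝔉. -/
noncomputable def Fterm (x : ℕ → ℂ) (m : ℕ) : ℂ :=
  ∑' k : {k : Fin m → ℕ // GapTuple m k}, ∏ i, x (k.1 i) * x (k.1 i + 1)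

/-- The function 𝔉, with the sequence `x` 1-indexed (`x 0` is ignored). -/
noncomputable def Ffun (x : ℕ → ℂ) : ℂ :=
  1 + ∑' m : ℕ, (-1 : ℂ) ^ (m + 1) * Fterm x (m + 1)

/-- 𝔉(t₁,…,t_n), i.e. 𝔉 applied to the sequence (t₁,…,t_n,0,0,…). -/
noncomputable def Ffin (n : ℕ) (t : ℕ → ℂ) : ℂ :=
  Ffun fun k => if 1 ≤ k ∧ k ≤ n then t k else 0

/-!
Both sides are continuants: they satisfy `P 0 = P 1 = 1` and
`P (n + 2) = P (n + 1) - t (n + 1) * t (n + 2) * P n`. For the determinant this is the Laplace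
expansion of a tridiagonal matrix along its last row. For `𝔉`, only gap tuples with all
`k i + 1 ≤ n` survive the truncation; for `n = N + 2` they split according to whether the last
index equals `N + 1`, and those that do are exactly the gap tuples bounded by `N - 1` extended by
`N + 1`.
-/

instance (m : ℕ) : DecidablePred (GapTuple m) := fun k => by
  unfold GapTuple
  infer_instance

namespace GapTuple

variable {m : ℕ} {k : Fin m → ℕ}

lemma add_two_mul_le (h : GapTuple m k) (d : ℕ) {i j : Fin m} (hij : (i : ℕ) + d = j) :
    k i + 2 * d ≤ k j := by
  induction d generalizing j with
  | zero =>
    obtain rfl : i = j := Fin.ext (by omega)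
    simp
  | succ d ih =>
    have hd : (i : ℕ) + d < m := by omega
    have h₁ := ih (j := ⟨i + d, hd⟩) rfl
    have h₂ := h.2 ⟨i + d, hd⟩ j (by simp; omega)
    omega

lemma two_mul_lt (h : GapTuple m k) (i : Fin m) : 2 * (i : ℕ) < k i := by
  have h₁ := h.add_two_mul_le i (i := ⟨0, i.pos⟩) (j := i) (by simp)
  have h₀ := h.1 ⟨0, i.pos⟩
  omega

lemma le_last {k : Fin (m + 1) → ℕ} (h : GapTuple (m + 1) k) (i : Fin (m + 1)) :
    k i ≤ k (Fin.last m) :=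
  (Nat.le_add_right _ _).trans (h.add_two_mul_le (m - i) (by simp; omega))

lemma snoc_iff {a : ℕ} :
    GapTuple (m + 1) (Fin.snoc k a) ↔ GapTuple m k ∧ 1 ≤ a ∧ ∀ i, k i + 2 ≤ a := by
  constructor
  · intro h
    refine ⟨⟨fun i => ?_, fun i j hij => ?_⟩, by simpa using h.1 (Fin.last m), fun i => ?_⟩
    · simpa using h.1 i.castSucc
    · simpa using h.2 i.castSucc j.castSucc (by simpa using hij)
    · have := h.add_two_mul_le (m - i) (i := i.castSucc) (j := Fin.last m) (by simp)
      simp only [Fin.snoc_castSucc, Fin.snoc_last] at this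
      omega
  · rintro ⟨hk, ha, hka⟩
    refine ⟨Fin.lastCases (by simpa) (fun i => by simpa using hk.1 i), fun i j hij => ?_⟩
    obtain ⟨i, rfl⟩ : ∃ i' : Fin m, i'.castSucc = i := ⟨⟨i, by omega⟩, rfl⟩
    induction j using Fin.lastCases with
    | last => simpa using hka _
    | cast j => simpa using hk.2 _ j (by simpa using hij)

end GapTuple

def gapTuples (n m : ℕ) : Finset (Fin m → ℕ) :=
  (Fintype.piFinset fun _ => Finset.range n).filter (GapTuple m)

lemma mem_gapTuples {n m : ℕ} {k : Fin m → ℕ} :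
    k ∈ gapTuples n m ↔ GapTuple m k ∧ ∀ i, k i < n := by
  simp [gapTuples, and_comm]

lemma gapTuples_eq_empty_of_lt {n m : ℕ} (h : n < 2 * m) : gapTuples n m = ∅ := by
  refine Finset.eq_empty_of_forall_notMem fun k hk => ?_
  rw [mem_gapTuples] at hk
  have := hk.1.two_mul_lt ⟨m - 1, by omega⟩
  have := hk.2 ⟨m - 1, by omega⟩
  simp only at *
  omega

section gapSum

variable {R : Type*} [CommSemiring R] (t : ℕ → R)

def gapSum (n m : ℕ) : R :=
  ∑ k ∈ gapTuples n m, ∏ i, t (k i) * t (k i + 1)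

lemma gapSum_zero_right (n : ℕ) : gapSum t n 0 = 1 := by
  have : gapTuples n 0 = Finset.univ :=
    Finset.eq_univ_of_forall fun _ => mem_gapTuples.2 ⟨⟨finZeroElim, finZeroElim⟩, finZeroElim⟩
  simp [gapSum, this]

lemma gapSum_eq_zero_of_lt {n m : ℕ} (h : n < 2 * m) : gapSum t n m = 0 := by
  rw [gapSum, gapTuples_eq_empty_of_lt h, Finset.sum_empty]

lemma filter_gapTuples_last_ne (N m : ℕ) :
    (gapTuples (N + 2) (m + 1)).filter (fun k => k (Fin.last m) ≠ N + 1) =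
      gapTuples (N + 1) (m + 1) := by
  ext k
  simp only [Finset.mem_filter, mem_gapTuples]
  constructor
  · rintro ⟨⟨hk, hlt⟩, hne⟩
    have := hlt (Fin.last m)
    exact ⟨hk, fun i => (hk.le_last i).trans_lt (by omega)⟩
  · rintro ⟨hk, hlt⟩
    exact ⟨⟨hk, fun i => (hlt i).trans (by omega)⟩, (hlt (Fin.last m)).ne⟩

lemma sum_filter_gapTuples_last_eq (N m : ℕ) :
    ∑ k ∈ (gapTuples (N + 2) (m + 1)).filter (fun k => k (Fin.last m) = N + 1),
        ∏ i, t (k i) * t (k i + 1) =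
      t (N + 1) * t (N + 2) * gapSum t N m := by
  rw [gapSum, Finset.mul_sum]
  refine Finset.sum_nbij' Fin.init (Fin.snoc · (N + 1)) ?_ ?_ ?_ ?_ ?_
  · intro k hk
    rw [Finset.mem_filter, mem_gapTuples] at hk
    obtain ⟨⟨hk, -⟩, hlast⟩ := hk
    rw [← Fin.snoc_init_self k, hlast, GapTuple.snoc_iff] at hk
    exact mem_gapTuples.2 ⟨hk.1, fun i => by have := hk.2.2 i; omega⟩
  · intro k hk
    rw [mem_gapTuples] at hk
    simp only [Finset.mem_filter, mem_gapTuples, GapTuple.snoc_iff, Fin.snoc_last]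
    refine ⟨⟨⟨hk.1, by omega, fun i => by have := hk.2 i; omega⟩, fun i => ?_⟩, trivial⟩
    induction i using Fin.lastCases with
    | last => simp
    | cast i => have := hk.2 i; simp; omega
  · intro k hk
    simp only [Finset.mem_filter] at hk
    rw [← hk.2, Fin.snoc_init_self]
  · intro k _
    exact Fin.init_snoc _ _
  · intro k hk
    simp only [Finset.mem_filter] at hk
    rw [Fin.prod_univ_castSucc, hk.2, mul_comm]
    rfl

lemma gapSum_succ_succ (N m : ℕ) :
    gapSum t (N + 2) (m + 1) =
      gapSum t (N + 1) (m + 1) + t (N + 1) * t (N + 2) * gapSum t N m := by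
  rw [gapSum, ← Finset.sum_filter_not_add_sum_filter _ (fun k => k (Fin.last m) = N + 1),
    filter_gapTuples_last_ne, sum_filter_gapTuples_last_eq]
  rfl

end gapSum

lemma Fterm_truncate_eq_gapSum (t : ℕ → ℂ) (n m : ℕ) :
    Fterm (fun k => if 1 ≤ k ∧ k ≤ n then t k else 0) m = gapSum t n m := by
  set x : ℕ → ℂ := fun k => if 1 ≤ k ∧ k ≤ n then t k else 0
  have hx {k : Fin m → ℕ} (hk : k ∈ gapTuples n m) (i : Fin m) :
      x (k i) * x (k i + 1) = t (k i) * t (k i + 1) := by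
    obtain ⟨hgap, hlt⟩ := mem_gapTuples.1 hk
    have := hgap.1 i
    have := hlt i
    simp only [x]
    rw [if_pos (by omega), if_pos (by omega)]
  have hvanish {k : Fin m → ℕ} (hk : k ∉ gapTuples n m) :
      {k | GapTuple m k}.indicator (fun k => ∏ i, x (k i) * x (k i + 1)) k = 0 := by
    by_cases hgap : GapTuple m k
    · obtain ⟨i, hi⟩ : ∃ i, n ≤ k i := by simpa [mem_gapTuples, hgap] using hk
      rw [Set.indicator_of_mem (show k ∈ {k | GapTuple m k} from hgap)]
      refine Finset.prod_eq_zero (Finset.mem_univ i) ?_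
      simp only [x, if_neg (show ¬(1 ≤ k i + 1 ∧ k i + 1 ≤ n) by omega), mul_zero]
    · exact Set.indicator_of_notMem (show k ∉ {k | GapTuple m k} from hgap) _
  rw [Fterm]
  refine (tsum_subtype {k | GapTuple m k} fun k => ∏ i, x (k i) * x (k i + 1)).trans ?_
  rw [tsum_eq_sum fun k hk => hvanish hk, gapSum]
  refine Finset.sum_congr rfl fun k hk => ?_
  rw [Set.indicator_of_mem (show k ∈ {k | GapTuple m k} from (mem_gapTuples.1 hk).1)]
  exact Finset.prod_congr rfl fun i _ => hx hk i

lemma Ffin_eq_sum_range (t : ℕ → ℂ) {n M : ℕ} (h : n ≤ M) :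
    Ffin n t = ∑ m ∈ Finset.range (M + 1), (-1) ^ m * gapSum t n m := by
  rw [Ffin, Ffun, tsum_eq_sum (s := Finset.range M), Finset.sum_range_succ', gapSum_zero_right]
  · simp [Fterm_truncate_eq_gapSum, add_comm]
  · intro m hm
    rw [Fterm_truncate_eq_gapSum, gapSum_eq_zero_of_lt t (by simp at hm; omega), mul_zero]

lemma Ffin_zero (t : ℕ → ℂ) : Ffin 0 t = 1 := by
  simp [Ffin_eq_sum_range t le_rfl, gapSum_zero_right]

lemma Ffin_one (t : ℕ → ℂ) : Ffin 1 t = 1 := by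
  simp [Ffin_eq_sum_range t le_rfl, Finset.sum_range_succ, gapSum_zero_right,
    gapSum_eq_zero_of_lt t (n := 1) (m := 1) (by norm_num)]

lemma Ffin_succ_succ (t : ℕ → ℂ) (N : ℕ) :
    Ffin (N + 2) t = Ffin (N + 1) t - t (N + 1) * t (N + 2) * Ffin N t := by
  have hsign (m : ℕ) (a : ℂ) : (-1) ^ (m + 1) * (t (N + 1) * t (N + 2) * a) =
      -(t (N + 1) * t (N + 2) * ((-1) ^ m * a)) := by ring
  rw [Ffin_eq_sum_range t (M := N + 2) le_rfl, Ffin_eq_sum_range t (M := N + 2) (by omega),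
    Ffin_eq_sum_range t (M := N + 1) (by omega), Finset.sum_range_succ' _ (N + 2),
    Finset.sum_range_succ' _ (N + 2)]
  simp only [gapSum_succ_succ, gapSum_zero_right, mul_add, Finset.sum_add_distrib, hsign,
    Finset.sum_neg_distrib, ← Finset.mul_sum]
  ring

namespace Matrix

variable {R : Type*} [CommRing R]

def tridiagonal (a b c : ℕ → R) (n : ℕ) : Matrix (Fin n) (Fin n) R := fun i j =>
  if (i : ℕ) = j then a i
  else if (j : ℕ) = i + 1 then b i
  else if (i : ℕ) = j + 1 then c j
  else 0

lemma tridiagonal_apply_eq_zero (a b c : ℕ → R) {n : ℕ} {i j : Fin n}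
    (h : (i : ℕ) + 1 < j ∨ (j : ℕ) + 1 < i) : tridiagonal a b c n i j = 0 := by
  simp only [tridiagonal]
  rw [if_neg (by omega), if_neg (by omega), if_neg (by omega)]

@[simp]
lemma tridiagonal_submatrix_castSucc (a b c : ℕ → R) (n : ℕ) :
    (tridiagonal a b c (n + 1)).submatrix Fin.castSucc Fin.castSucc = tridiagonal a b c n := by
  rfl

lemma det_tridiagonal_succ_succ (a b c : ℕ → R) (n : ℕ) :
    (tridiagonal a b c (n + 2)).det =
      a (n + 1) * (tridiagonal a b c (n + 1)).det - b n * c n * (tridiagonal a b c n).det := by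
  set A := tridiagonal a b c (n + 2)
  -- Along the last row only columns `n` and `n + 1` contribute; the minor of column `n` has the
  -- single entry `b n` in its last column.
  have hB : (A.submatrix Fin.castSucc (Fin.last n).castSucc.succAbove).det =
      b n * (tridiagonal a b c n).det := by
    have hcol : (Fin.last n).castSucc.succAbove ∘ Fin.castSucc = Fin.castSucc ∘ Fin.castSucc :=
      funext fun j => Fin.succAbove_castSucc_of_lt _ _ (Fin.castSucc_lt_last j)
    rw [det_succ_column _ (Fin.last n), Fin.sum_univ_castSucc, Finset.sum_eq_zero,
      Fin.succAbove_last, submatrix_submatrix, hcol, ← submatrix_submatrix,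
      tridiagonal_submatrix_castSucc, tridiagonal_submatrix_castSucc]
    · simp [A, tridiagonal, ← two_mul, pow_mul]
    · intro i _
      simp [A, tridiagonal_apply_eq_zero a b c (i := i.castSucc.castSucc)
        (j := Fin.last (n + 1)) (by simp)]
  rw [det_succ_row A (Fin.last (n + 1)), Fin.sum_univ_castSucc, Fin.sum_univ_castSucc,
    Finset.sum_eq_zero, Fin.succAbove_last, hB]
  · simp [A, tridiagonal, show n ≠ n + 1 + 1 by omega]
    ring
  · intro j _
    simp [A, tridiagonal_apply_eq_zero a b c (i := Fin.last (n + 1))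
        (j := j.castSucc.castSucc) (by simp)]

end Matrix

lemma Ffin_eq_det_tridiagonal (t : ℕ → ℂ) (n : ℕ) :
    Ffin n t = (Matrix.tridiagonal 1 (fun i => t (i + 1)) (fun i => t (i + 2)) n).det := by
  induction n using Nat.twoStepInduction with
  | zero => simp [Ffin_zero]
  | one => simp [Ffin_one, Matrix.tridiagonal]
  | more n h₀ h₁ =>
    rw [Ffin_succ_succ, Matrix.det_tridiagonal_succ_succ, ← h₀, ← h₁, Pi.one_apply, one_mul]

theorem Ffin_eq_det_general (n : ℕ) (t : ℕ → ℂ)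
    (T : Matrix (Fin n) (Fin n) ℂ)
    (hT : ∀ i j : Fin n,
      T i j = if (j : ℕ) = (i : ℕ) + 1 ∨ (i : ℕ) = (j : ℕ) + 1 then t ((i : ℕ) + 1) else 0) :
    Ffin n t = Matrix.det (1 + T) := by
  have h1T : 1 + T = Matrix.tridiagonal 1 (fun i => t (i + 1)) (fun i => t (i + 2)) n := by
    ext i j
    simp only [Matrix.add_apply, Matrix.one_apply, hT, Matrix.tridiagonal, Fin.ext_iff]
    split_ifs <;> first | omega | simp_all
  rw [h1T, Ffin_eq_det_tridiagonal]

/-- 𝔉(t₁,…,t_n) = det(I + T) where T is the tridiagonal matrix with zero diagonal and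
T_{k,k-1} = T_{k,k+1} = t_k. -/
theorem Ffin_eq_det (n : ℕ) (hn : 1 ≤ n) (t : ℕ → ℂ)
    (T : Matrix (Fin n) (Fin n) ℂ)
    (hT : ∀ i j : Fin n,
      T i j = if (j : ℕ) = (i : ℕ) + 1 ∨ (i : ℕ) = (j : ℕ) + 1 then t ((i : ℕ) + 1) else 0) :
    Ffin n t = Matrix.det (1 + T) :=
  Ffin_eq_det_general n t T hT
end

section
/- Let x = (x_k)_{k≥1} be a sequence of complex numbers with Σ_{k=1}^{∞} |x_k x_{k+1}| < ∞. Then the defining series for 𝔉(x) converges absolutely and |𝔉(x)| ≤ exp(Σ_{k=1}^{∞} |x_k x_{k+1}|) and |𝔉(x) − 1| ≤ exp(Σ_{k=1}^{∞} |x_k x_{k+1}|) − 1. -/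
open scoped BigOperators

open scoped Nat

/-!
Each gap tuple (k₁ < ⋯ < k_m) contributes ∏ aₖᵢ₋₁ in absolute value, where aⱼ = |x_{j+1} x_{j+2}|.
Composing a strictly increasing tuple with the m! permutations of its positions gives distinct
elements of ℕᵐ, so the m-th term is at most (Σ a)ᵐ / m!, and summing over m ≥ 1 gives exp(Σ a) − 1.
-/

theorem hasSum_prod_pi_of_nonneg {ι : Type*} {a : ι → ℝ} (ha0 : 0 ≤ a) (ha : Summable a)
    (m : ℕ) : HasSum (fun h : Fin m → ι => ∏ i, a (h i)) ((∑' i, a i) ^ m) := by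
  induction m with
  | zero => simp
  | succ m ih =>
    have hprod_nonneg : 0 ≤ fun h : Fin m → ι => ∏ i, a (h i) := fun h =>
      Finset.prod_nonneg fun i _ => ha0 (h i)
    have hcons : (fun h : Fin (m + 1) → ι => ∏ i, a (h i)) ∘ Fin.consEquiv (fun _ => ι)
        = fun p => a p.1 * ∏ i, a (p.2 i) := by
      funext p
      simp [Fin.consEquiv, Fin.prod_univ_succ]
    rw [← (Fin.consEquiv fun _ => ι).hasSum_iff, hcons, pow_succ']
    have hprod := ha.mul_of_nonneg ih.summable ha0 hprod_nonneg
    have hmul := ha.hasSum.mul ih hprod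
    exact hmul

theorem StrictMono.eq_of_comp_perm_eq {α : Type*} [LinearOrder α] {m : ℕ} {k k' : Fin m → α}
    (hk : StrictMono k) (hk' : StrictMono k') {σ σ' : Equiv.Perm (Fin m)}
    (h : k ∘ σ = k' ∘ σ') : k = k' ∧ σ = σ' := by
  have hkk' : k = k' := by
    refine (hk.range_inj hk').1 ?_
    rw [← σ.surjective.range_comp k, ← σ'.surjective.range_comp k', h]
  subst hkk'
  exact ⟨rfl, Equiv.ext fun i => hk.injective (congrFun h i)⟩

section StrictMonoTuples

variable {α : Type*} [LinearOrder α] {a : α → ℝ}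

theorem summable_prod_strictMono (ha0 : 0 ≤ a) (ha : Summable a) (m : ℕ) :
    Summable fun k : {k : Fin m → α // StrictMono k} => ∏ i, a (k.1 i) :=
  (hasSum_prod_pi_of_nonneg ha0 ha m).summable.comp_injective Subtype.val_injective

theorem tsum_prod_strictMono_le (ha0 : 0 ≤ a) (ha : Summable a) (m : ℕ) :
    ∑' k : {k : Fin m → α // StrictMono k}, ∏ i, a (k.1 i) ≤ (∑' j, a j) ^ m / m ! := by
  set G := fun k : {k : Fin m → α // StrictMono k} => ∏ i, a (k.1 i)
  let Φ : {k : Fin m → α // StrictMono k} × Equiv.Perm (Fin m) → (Fin m → α) :=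
    fun p => p.1.1 ∘ p.2
  have hΦ : Function.Injective Φ := fun p q h =>
    have hpq := p.1.2.eq_of_comp_perm_eq q.1.2 h
    Prod.ext (Subtype.ext hpq.1) hpq.2
  have hGΦ : ∀ p, ∏ i, a (Φ p i) = G p.1 := fun p => Equiv.prod_comp p.2 fun i => a (p.1.1 i)
  have hpi := hasSum_prod_pi_of_nonneg ha0 ha m
  have hpairs : Summable fun p : {k : Fin m → α // StrictMono k} × Equiv.Perm (Fin m) => G p.1 :=
    (hpi.summable.comp_injective hΦ).congr hGΦ
  have hcount : ∑' p : {k : Fin m → α // StrictMono k} × Equiv.Perm (Fin m), G p.1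
      = m ! * ∑' k, G k := by
    simp [hpairs.tsum_prod, tsum_mul_left, Fintype.card_perm]
  have hle : ∑' p : {k : Fin m → α // StrictMono k} × Equiv.Perm (Fin m), G p.1
      ≤ (∑' j, a j) ^ m := by
    rw [← hpi.tsum_eq]
    exact hpairs.tsum_le_tsum_of_inj Φ hΦ (fun _ _ => Finset.prod_nonneg fun i _ => ha0 _)
      (fun p => (hGΦ p).ge) hpi.summable
  rw [le_div_iff₀ (by positivity), mul_comm, ← hcount]
  exact hle

end StrictMonoTuples

theorem GapTuple.strictMono {m : ℕ} {k : Fin m → ℕ} (h : GapTuple m k) : StrictMono k := by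
  cases m with
  | zero => exact fun i => i.elim0
  | succ n =>
    refine Fin.strictMono_iff_lt_succ.2 fun i => ?_
    have := h.2 i.castSucc i.succ (by simp)
    omega

theorem GapTuple.strictMono_sub_one {m : ℕ} {k : Fin m → ℕ} (h : GapTuple m k) :
    StrictMono fun i => k i - 1 := fun i j hij => by
  show k i - 1 < k j - 1
  have := h.strictMono hij
  have := h.1 i
  omega

def GapTuple.pred {m : ℕ} (k : {k : Fin m → ℕ // GapTuple m k}) :
    {k : Fin m → ℕ // StrictMono k} :=
  ⟨fun i => k.1 i - 1, k.2.strictMono_sub_one⟩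

theorem GapTuple.pred_injective {m : ℕ} : Function.Injective (@GapTuple.pred m) := by
  intro k k' h
  ext i
  have := congrFun (congrArg Subtype.val h) i
  have := k.2.1 i
  have := k'.2.1 i
  simp only [GapTuple.pred] at *
  omega

section Fterm

variable {x : ℕ → ℂ}

theorem norm_prod_gapTuple {m : ℕ} (k : {k : Fin m → ℕ // GapTuple m k}) :
    ‖∏ i, x (k.1 i) * x (k.1 i + 1)‖
      = ∏ i, ‖x ((GapTuple.pred k).1 i + 1) * x ((GapTuple.pred k).1 i + 2)‖ := by
  rw [norm_prod]
  refine Finset.prod_congr rfl fun i _ => ?_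
  have := k.2.1 i
  simp only [GapTuple.pred]
  rw [Nat.sub_add_cancel this, show k.1 i - 1 + 2 = k.1 i + 1 by omega]

variable (hx : Summable fun k : ℕ => ‖x (k + 1) * x (k + 2)‖)
include hx

theorem summable_norm_prod_gapTuple (m : ℕ) :
    Summable fun k : {k : Fin m → ℕ // GapTuple m k} => ‖∏ i, x (k.1 i) * x (k.1 i + 1)‖ :=
  ((summable_prod_strictMono (fun _ => norm_nonneg _) hx m).comp_injective
    GapTuple.pred_injective).congr fun k => (norm_prod_gapTuple k).symm

theorem norm_Fterm_le (m : ℕ) :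
    ‖Fterm x m‖ ≤ (∑' k : ℕ, ‖x (k + 1) * x (k + 2)‖) ^ m / m ! := calc
  ‖Fterm x m‖ ≤ ∑' k : {k : Fin m → ℕ // GapTuple m k}, ‖∏ i, x (k.1 i) * x (k.1 i + 1)‖ :=
    norm_tsum_le_tsum_norm (summable_norm_prod_gapTuple hx m)
  _ = ∑' k : {k : Fin m → ℕ // GapTuple m k},
      ∏ i, ‖x ((GapTuple.pred k).1 i + 1) * x ((GapTuple.pred k).1 i + 2)‖ :=
    tsum_congr norm_prod_gapTuple
  _ ≤ ∑' k : {k : Fin m → ℕ // StrictMono k}, ∏ i, ‖x (k.1 i + 1) * x (k.1 i + 2)‖ :=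
    tsum_comp_le_tsum_of_inj (summable_prod_strictMono (fun _ => norm_nonneg _) hx m)
      (fun _ => Finset.prod_nonneg fun _ _ => norm_nonneg _) GapTuple.pred_injective
  _ ≤ _ := tsum_prod_strictMono_le (fun _ => norm_nonneg _) hx m

end Fterm

theorem Real.hasSum_pow_succ_div_factorial (r : ℝ) :
    HasSum (fun m : ℕ => r ^ (m + 1) / (m + 1)!) (Real.exp r - 1) := by
  have := (hasSum_nat_add_iff' 1).mpr (NormedSpace.expSeries_div_hasSum_exp r)
  simpa [← Real.exp_eq_exp_ℝ] using this

theorem norm_tsum_le_exp_sub_one {E : Type*} [SeminormedAddCommGroup E] {f : ℕ → E} {r : ℝ}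
    (hf : ∀ m, ‖f m‖ ≤ r ^ (m + 1) / (m + 1)!) :
    Summable (fun m => ‖f m‖) ∧ ‖∑' m, f m‖ ≤ Real.exp r - 1 := by
  have hr := Real.hasSum_pow_succ_div_factorial r
  have hsum : Summable fun m => ‖f m‖ := hr.summable.of_nonneg_of_le (fun _ => norm_nonneg _) hf
  exact ⟨hsum, (norm_tsum_le_tsum_norm hsum).trans
    (hr.tsum_eq ▸ hsum.tsum_le_tsum hf hr.summable)⟩

/-- If Σ|x_k x_{k+1}| < ∞ then the series defining 𝔉(x) converges absolutely and
|𝔉(x)| ≤ exp(Σ|x_k x_{k+1}|), |𝔉(x) − 1| ≤ exp(Σ|x_k x_{k+1}|) − 1. -/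
theorem Ffun_bounds (x : ℕ → ℂ)
    (hx : Summable fun k : ℕ => ‖x (k + 1) * x (k + 2)‖) :
    (∀ m : ℕ, Summable fun k : {k : Fin m → ℕ // GapTuple m k} =>
        ‖∏ i, x (k.1 i) * x (k.1 i + 1)‖) ∧
    (Summable fun m : ℕ => ‖(-1 : ℂ) ^ (m + 1) * Fterm x (m + 1)‖) ∧
    ‖Ffun x‖ ≤ Real.exp (∑' k : ℕ, ‖x (k + 1) * x (k + 2)‖) ∧
    ‖Ffun x - 1‖ ≤ Real.exp (∑' k : ℕ, ‖x (k + 1) * x (k + 2)‖) - 1 := by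
  have hterm : ∀ m : ℕ, ‖(-1 : ℂ) ^ (m + 1) * Fterm x (m + 1)‖
      ≤ (∑' k : ℕ, ‖x (k + 1) * x (k + 2)‖) ^ (m + 1) / (m + 1)! := fun m => by
    simpa using norm_Fterm_le hx (m + 1)
  obtain ⟨hsum, hle⟩ := norm_tsum_le_exp_sub_one hterm
  have hF : Ffun x - 1 = ∑' m : ℕ, (-1 : ℂ) ^ (m + 1) * Fterm x (m + 1) := by
    rw [Ffun, add_sub_cancel_left]
  refine ⟨summable_norm_prod_gapTuple hx, hsum, ?_, hF ▸ hle⟩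
  calc ‖Ffun x‖ = ‖1 + (Ffun x - 1)‖ := by rw [add_sub_cancel]
    _ ≤ 1 + ‖Ffun x - 1‖ := (norm_add_le _ _).trans_eq (by rw [norm_one])
    _ ≤ _ := by rw [hF]; linarith
end

section
/- Let J_n be the n×n real (or complex) Jacobi matrix with diagonal entries λ₁,…,λ_n and off-diagonal entries w₁,…,w_{n−1} (i.e., (J_n)_{k,k} = λ_k, (J_n)_{k,k+1} = (J_n)_{k+1,k} = w_k). Define γ₁ = 1 and γ_{k+1} = w_k/γ_k. Then for all z ∈ ℂ distinct from every λ_k, det(J_n − z·I_n) = (∏_{k=1}^{n} (λ_k − z))·𝔉(γ₁²/(λ₁ − z), γ₂²/(λ₂ − z), …, γ_n²/(λ_n − z)). -/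
open scoped BigOperators

noncomputable def Amat (d b : ℕ → ℂ) (n : ℕ) : Matrix (Fin n) (Fin n) ℂ :=
  Matrix.of fun i j =>
    if (i : ℕ) = j then d ((i : ℕ) + 1)
    else if (j : ℕ) = (i : ℕ) + 1 ∨ (i : ℕ) = (j : ℕ) + 1 then b (min (i : ℕ) (j : ℕ) + 1)
    else 0

lemma Amat_apply (d b : ℕ → ℂ) (n : ℕ) (i j : Fin n) :
    Amat d b n i j =
    if (i : ℕ) = j then d ((i : ℕ) + 1)
    else if (j : ℕ) = (i : ℕ) + 1 ∨ (i : ℕ) = (j : ℕ) + 1 then b (min (i : ℕ) (j : ℕ) + 1)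
    else 0 := rfl

lemma det_Amat_rec (d b : ℕ → ℂ) (n : ℕ) :
    (Amat d b (n + 2)).det =
      d (n + 2) * (Amat d b (n + 1)).det - b (n + 1) ^ 2 * (Amat d b n).det := by
  rw [Matrix.det_succ_row _ (Fin.last (n + 1)), Fin.sum_univ_castSucc, Fin.sum_univ_castSucc]
  have h0 : (∑ j : Fin n, (-1 : ℂ) ^ ((Fin.last (n+1) : ℕ) + ((j.castSucc.castSucc : Fin (n+2)) : ℕ)) *
      Amat d b (n+2) (Fin.last (n+1)) j.castSucc.castSucc *
      ((Amat d b (n+2)).submatrix (Fin.last (n+1)).succAbove j.castSucc.castSucc.succAbove).det) = 0 := by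
    apply Finset.sum_eq_zero
    intro j _
    have : Amat d b (n+2) (Fin.last (n+1)) j.castSucc.castSucc = 0 := by
      rw [Amat_apply]
      have hj : (j : ℕ) < n := j.isLt
      rw [if_neg (by simp only [Fin.val_last, Fin.coe_castSucc, Fin.val_succ] <;> first | omega | tauto), if_neg (by simp only [Fin.val_last, Fin.coe_castSucc, Fin.val_succ] <;> first | omega | tauto)]
    rw [this]; ring
  rw [h0, zero_add]
  -- the main diagonal term
  have h1 : Amat d b (n+2) (Fin.last (n+1)) (Fin.last (n+1)) = d (n + 2) := by
    rw [Amat_apply, if_pos rfl]; simp [Fin.last]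
  have hminor1 : (Amat d b (n+2)).submatrix (Fin.last (n+1)).succAbove
      (Fin.last (n+1)).succAbove = Amat d b (n+1) := by
    ext i j
    rw [Matrix.submatrix_apply, Fin.succAbove_last, Amat_apply, Amat_apply]
    simp
  have h2 : Amat d b (n+2) (Fin.last (n+1)) ((Fin.last n).castSucc) = b (n + 1) := by
    rw [Amat_apply]
    rw [if_neg (by simp only [Fin.val_last, Fin.coe_castSucc, Fin.val_succ] <;> first | omega | tauto), if_pos (by simp only [Fin.val_last, Fin.coe_castSucc, Fin.val_succ] <;> first | omega | tauto)]
    simp [Fin.last]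
  -- the middle minor
  set M : Matrix (Fin (n+1)) (Fin (n+1)) ℂ :=
    (Amat d b (n+2)).submatrix (Fin.last (n+1)).succAbove ((Fin.last n).castSucc).succAbove with hMdef
  have hMdet : M.det = b (n + 1) * (Amat d b n).det := by
    rw [Matrix.det_succ_column M (Fin.last n), Fin.sum_univ_castSucc]
    have hz : (∑ i : Fin n, (-1 : ℂ) ^ (((i.castSucc : Fin (n+1)) : ℕ) + ((Fin.last n : Fin (n+1)) : ℕ)) *
        M i.castSucc (Fin.last n) *
        (M.submatrix i.castSucc.succAbove (Fin.last n).succAbove).det) = 0 := by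
      apply Finset.sum_eq_zero
      intro i _
      have : M i.castSucc (Fin.last n) = 0 := by
        rw [hMdef, Matrix.submatrix_apply, Fin.succAbove_last, Fin.succAbove_castSucc_self,
          Amat_apply]
        have hi : (i : ℕ) < n := i.isLt
        rw [if_neg (by simp only [Fin.val_last, Fin.coe_castSucc, Fin.val_succ] <;> first | omega | tauto), if_neg (by simp only [Fin.val_last, Fin.coe_castSucc, Fin.val_succ] <;> first | omega | tauto)]
      rw [this]; ring
    rw [hz, zero_add]
    have hMe : M (Fin.last n) (Fin.last n) = b (n + 1) := by
      rw [hMdef, Matrix.submatrix_apply, Fin.succAbove_last, Fin.succAbove_castSucc_self,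
        Amat_apply]
      rw [if_neg (by simp only [Fin.val_last, Fin.coe_castSucc, Fin.val_succ] <;> first | omega | tauto), if_pos (by simp only [Fin.val_last, Fin.coe_castSucc, Fin.val_succ] <;> first | omega | tauto)]
      simp [Fin.last]
    have hMm : M.submatrix (Fin.last n).succAbove (Fin.last n).succAbove = Amat d b n := by
      ext i j
      rw [Matrix.submatrix_apply, Fin.succAbove_last, hMdef, Matrix.submatrix_apply,
        Fin.succAbove_last, Fin.succAbove_castSucc_of_lt _ _ (Fin.castSucc_lt_last j),
        Amat_apply, Amat_apply]
      simp
    rw [hMe, hMm]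
    have : ((-1 : ℂ)) ^ (((Fin.last n : Fin (n+1)) : ℕ) + ((Fin.last n : Fin (n+1)) : ℕ)) = 1 := by
      simp only [Fin.val_last, Fin.coe_castSucc]; exact Even.neg_one_pow ⟨n, by ring⟩
    rw [this]; ring
  rw [h1, h2, hminor1, hMdet]
  have e1 : ((-1 : ℂ)) ^ (((Fin.last (n+1) : Fin (n+2)) : ℕ) + (((Fin.last n).castSucc : Fin (n+2)) : ℕ)) = -1 := by
    simp only [Fin.val_last, Fin.coe_castSucc]
    exact Odd.neg_one_pow ⟨n, by ring⟩
  have e2 : ((-1 : ℂ)) ^ (((Fin.last (n+1) : Fin (n+2)) : ℕ) + ((Fin.last (n+1) : Fin (n+2)) : ℕ)) = 1 := by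
    simp only [Fin.val_last, Fin.coe_castSucc]
    exact Even.neg_one_pow ⟨n+1, by ring⟩
  rw [e1, e2]
  ring

-- basic gap tuple lemmas
lemma gap_mono {m : ℕ} {k : Fin m → ℕ} (h : GapTuple m k) :
    ∀ i j : Fin m, (i : ℕ) < (j : ℕ) → k i + 2 ≤ k j := by
  have key : ∀ a : ℕ, ∀ i j : Fin m, (i : ℕ) + a + 1 = (j : ℕ) → k i + 2 ≤ k j := by
    intro a
    induction a with
    | zero => intro i j hij; exact h.2 i j (by omega)
    | succ a ih =>
      intro i j hij
      have hm : (i : ℕ) + a + 1 < m := by have := j.isLt; omega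
      have h1 : k i + 2 ≤ k ⟨(i : ℕ) + a + 1, hm⟩ := ih i _ rfl
      have h2 : k ⟨(i : ℕ) + a + 1, hm⟩ + 2 ≤ k j := h.2 _ j (by simpa using by omega)
      omega
  intro i j hij
  exact key ((j : ℕ) - (i : ℕ) - 1) i j (by omega)

lemma gap_lower {m : ℕ} {k : Fin m → ℕ} (h : GapTuple m k) (i : Fin m) :
    2 * (i : ℕ) + 1 ≤ k i := by
  have key : ∀ p : ℕ, ∀ hp : p < m, 2 * p + 1 ≤ k ⟨p, hp⟩ := by
    intro p
    induction p with
    | zero => intro hp; exact h.1 _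
    | succ p ih =>
      intro hp
      have h1 := ih (by omega)
      have h2 : k ⟨p, by omega⟩ + 2 ≤ k ⟨p + 1, hp⟩ := h.2 _ _ rfl
      omega
  have := key (i : ℕ) i.isLt
  simpa using this

lemma gap_le_last {m : ℕ} {k : Fin (m + 1) → ℕ} (h : GapTuple (m + 1) k) (i : Fin (m + 1)) :
    k i ≤ k (Fin.last m) := by
  rcases eq_or_lt_of_le (Fin.le_last i) with he | hl
  · rw [← he]
  · have := gap_mono h i (Fin.last m) (by simpa [Fin.lt_iff_val_lt_val] using hl)
    omega

open scoped Classical in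
noncomputable def Sfin (n m : ℕ) : Finset (Fin m → ℕ) :=
  (Fintype.piFinset fun _ : Fin m => Finset.range n).filter (GapTuple m)

lemma mem_Sfin {n m : ℕ} {k : Fin m → ℕ} :
    k ∈ Sfin n m ↔ (∀ i, k i < n) ∧ GapTuple m k := by
  classical
  simp [Sfin, Fintype.mem_piFinset]

noncomputable def Gm (t : ℕ → ℂ) (n m : ℕ) : ℂ :=
  ∑ k ∈ Sfin n m, ∏ i, t (k i) * t (k i + 1)

lemma Gm_eq_zero (t : ℕ → ℂ) {n m : ℕ} (h : n < 2 * m) : Gm t n m = 0 := by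
  have he : Sfin n m = ∅ := by
    apply Finset.eq_empty_of_forall_notMem
    intro k hk
    rw [mem_Sfin] at hk
    rcases m with _ | m'
    · omega
    · have h1 := gap_lower hk.2 (Fin.last m')
      have h2 := hk.1 (Fin.last m')
      simp [Fin.val_last] at h1
      omega
  rw [Gm, he, Finset.sum_empty]

lemma Gm_zero (t : ℕ → ℂ) (n : ℕ) : Gm t n 0 = 1 := by
  have h1 : Sfin n 0 = {fun i => i.elim0} := by
    apply Finset.eq_singleton_iff_unique_mem.mpr
    constructor
    · rw [mem_Sfin]
      exact ⟨fun i => i.elim0, fun i => i.elim0, fun i j _ => i.elim0⟩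
    · intro k _; funext i; exact i.elim0
  rw [Gm, h1, Finset.sum_singleton]
  simp

lemma Gm_rec (t : ℕ → ℂ) (n m : ℕ) :
    Gm t (n + 2) (m + 1) = Gm t (n + 1) (m + 1) + t (n + 1) * t (n + 2) * Gm t n m := by
  classical
  rw [show Gm t (n+2) (m+1) = ∑ k ∈ Sfin (n+2) (m+1), ∏ i, t (k i) * t (k i + 1) from rfl]
  rw [← Finset.sum_filter_add_sum_filter_not (Sfin (n+2) (m+1))
    (fun k => k (Fin.last m) < n + 1)]
  congr 1
  · -- first part equals Gm t (n+1) (m+1)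
    rw [Gm]
    congr 1
    ext k
    rw [Finset.mem_filter, mem_Sfin, mem_Sfin]
    constructor
    · rintro ⟨⟨_, hg⟩, hlt⟩
      refine ⟨fun i => ?_, hg⟩
      have := gap_le_last hg i
      omega
    · rintro ⟨hb, hg⟩
      exact ⟨⟨fun i => by have := hb i; omega, hg⟩, hb _⟩
  · -- second part
    rw [show t (n+1) * t (n+2) * Gm t n m
        = ∑ k ∈ Sfin n m, t (n+1) * t (n+2) * ∏ i, t (k i) * t (k i + 1) by
      rw [Gm, Finset.mul_sum]]
    refine Finset.sum_nbij' (fun k => Fin.init k) (fun k => Fin.snoc k (n + 1)) ?_ ?_ ?_ ?_ ?_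
    · -- init lands in Sfin n m
      intro k hk
      rw [Finset.mem_filter, mem_Sfin] at hk
      obtain ⟨⟨hb, hg⟩, hlast⟩ := hk
      have hlast' : k (Fin.last m) = n + 1 := by have := hb (Fin.last m); omega
      rw [mem_Sfin]
      constructor
      · intro i
        show k i.castSucc < n
        have := gap_mono hg i.castSucc (Fin.last m) (by simpa using i.isLt)
        omega
      · constructor
        · intro i; exact hg.1 i.castSucc
        · intro i j hij
          exact hg.2 i.castSucc j.castSucc (by simpa using hij)
    · -- snoc lands in the filtered set
      intro k hk
      rw [mem_Sfin] at hk
      obtain ⟨hb, hg⟩ := hk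
      have hsn : ∀ i : Fin (m+1), (Fin.snoc k (n+1) : Fin (m+1) → ℕ) i =
          if h : (i : ℕ) < m then k ⟨i, h⟩ else n + 1 := by
        intro i
        induction i using Fin.lastCases with
        | last =>
          rw [Fin.snoc_last, dif_neg (by simp)]
        | cast i =>
          rw [Fin.snoc_castSucc, dif_pos (show ((i.castSucc : Fin (m+1)) : ℕ) < m by
            simpa using i.isLt)]
          congr 1
      rw [Finset.mem_filter, mem_Sfin]
      refine ⟨⟨fun i => ?_, ?_, ?_⟩, ?_⟩
      · simp only [hsn]; split_ifs with h
        · have := hb ⟨(i:ℕ), h⟩; omega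
        · omega
      · intro i; simp only [hsn]; split_ifs with h
        · exact hg.1 _
        · omega
      · intro i j hij
        simp only [hsn]
        have hjm : (j : ℕ) ≤ m := Nat.le_of_lt_succ j.isLt
        split_ifs with h1 h2 h2
        · exact hg.2 ⟨(i:ℕ), h1⟩ ⟨(j:ℕ), h2⟩ (by simpa using hij)
        · -- j = last, i = m-1
          have hjm' : (j : ℕ) = m := by omega
          have him : (i : ℕ) + 1 = m := by omega
          -- k ⟨i, h1⟩ < n so + 2 ≤ n + 1
          have := hb ⟨(i:ℕ), h1⟩
          omega
        · omega
        · omega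
      · simp only [hsn]
        split_ifs with h
        · simp [Fin.val_last] at h
        · omega
    · -- left inverse
      intro k hk
      rw [Finset.mem_filter, mem_Sfin] at hk
      have hlast' : k (Fin.last m) = n + 1 := by
        have := hk.1.1 (Fin.last m); have := hk.2; omega
      rw [← hlast']
      exact Fin.snoc_init_self k
    · intro k _
      exact Fin.init_snoc _ _
    · -- value identity
      intro k hk
      rw [Finset.mem_filter, mem_Sfin] at hk
      have hlast' : k (Fin.last m) = n + 1 := by
        have := hk.1.1 (Fin.last m); have := hk.2; omega
      rw [Fin.prod_univ_castSucc, hlast']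
      have : ∀ i : Fin m, Fin.init k i = k i.castSucc := fun i => rfl
      simp only [this]
      ring

noncomputable def Hfun (t : ℕ → ℂ) (n : ℕ) : ℂ :=
  1 + ∑ m ∈ Finset.range n, (-1 : ℂ) ^ (m + 1) * Gm t n (m + 1)

lemma Hfun_zero (t : ℕ → ℂ) : Hfun t 0 = 1 := by simp [Hfun]

lemma Hfun_one (t : ℕ → ℂ) : Hfun t 1 = 1 := by
  rw [Hfun]
  rw [Finset.sum_range_one, Gm_eq_zero t (by omega)]
  ring

lemma Hfun_rec (t : ℕ → ℂ) (n : ℕ) :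
    Hfun t (n + 2) = Hfun t (n + 1) - t (n + 1) * t (n + 2) * Hfun t n := by
  have e1 : ∑ m ∈ Finset.range (n+2), (-1 : ℂ) ^ (m + 1) * Gm t (n+2) (m + 1)
      = ∑ m ∈ Finset.range (n+2), ((-1 : ℂ) ^ (m + 1) * Gm t (n+1) (m + 1)
        + t (n+1) * t (n+2) * ((-1 : ℂ) ^ (m + 1) * Gm t n m)) := by
    apply Finset.sum_congr rfl
    intro m _
    rw [Gm_rec]
    ring
  have e2 : ∑ m ∈ Finset.range (n+2), (-1 : ℂ) ^ (m + 1) * Gm t (n+1) (m + 1)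
      = ∑ m ∈ Finset.range (n+1), (-1 : ℂ) ^ (m + 1) * Gm t (n+1) (m + 1) := by
    rw [Finset.sum_range_succ, Gm_eq_zero t (by omega)]
    ring
  have hterm : ∀ m : ℕ, (-1 : ℂ) ^ (m + 1 + 1) * Gm t n (m + 1)
      = -((-1 : ℂ) ^ (m + 1) * Gm t n (m + 1)) := by
    intro m; rw [pow_succ]; ring
  have e3 : ∑ m ∈ Finset.range (n+2), (-1 : ℂ) ^ (m + 1) * Gm t n m
      = -(1 + ∑ m ∈ Finset.range n, (-1 : ℂ) ^ (m + 1) * Gm t n (m + 1)) := by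
    rw [Finset.sum_range_succ', Gm_zero, Finset.sum_range_succ,
      Gm_eq_zero t (show n < 2 * (n + 1) by omega),
      Finset.sum_congr rfl (fun m _ => hterm m), Finset.sum_neg_distrib]
    ring
  simp only [Hfun]
  rw [e1, Finset.sum_add_distrib, e2, ← Finset.mul_sum, e3]
  ring

lemma Fterm_eq (t : ℕ → ℂ) (n m : ℕ) :
    Fterm (fun k => if 1 ≤ k ∧ k ≤ n then t k else 0) m = Gm t n m := by
  classical
  set x : ℕ → ℂ := fun k => if 1 ≤ k ∧ k ≤ n then t k else 0 with hx
  have h1 : Fterm x m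
      = ∑' k : Fin m → ℕ, Set.indicator {k | GapTuple m k}
          (fun k => ∏ i, x (k i) * x (k i + 1)) k := by
    rw [Fterm]
    exact tsum_subtype {k | GapTuple m k} (fun k => ∏ i, x (k i) * x (k i + 1))
  have hvan : ∀ k ∉ (Fintype.piFinset fun _ : Fin m => Finset.range n),
      Set.indicator {k | GapTuple m k} (fun k => ∏ i, x (k i) * x (k i + 1)) k = 0 := by
    intro k hk
    rw [Fintype.mem_piFinset] at hk
    push_neg at hk
    obtain ⟨i, hi⟩ := hk
    rw [Finset.mem_range, not_lt] at hi
    by_cases hg : GapTuple m k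
    · rw [Set.indicator_of_mem (show k ∈ {k | GapTuple m k} from hg)]
      apply Finset.prod_eq_zero (Finset.mem_univ i)
      have hz : x (k i + 1) = 0 := by
        rw [hx]; simp only; rw [if_neg (by omega)]
      rw [hz, mul_zero]
    · exact Set.indicator_of_notMem (show k ∉ {k | GapTuple m k} from hg) _
  rw [h1, tsum_eq_sum hvan]
  rw [Gm, Sfin]
  rw [Finset.sum_filter]
  apply Finset.sum_congr rfl
  intro k hk
  rw [Set.indicator_apply]
  simp only [Set.mem_setOf_eq]
  by_cases hg : GapTuple m k
  · rw [if_pos hg, if_pos hg]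
    apply Finset.prod_congr rfl
    intro i _
    rw [Fintype.mem_piFinset] at hk
    have h1' := hg.1 i
    have h2 := hk i
    rw [Finset.mem_range] at h2
    rw [hx]; simp only
    rw [if_pos (by omega : 1 ≤ k i ∧ k i ≤ n), if_pos (by omega : 1 ≤ k i + 1 ∧ k i + 1 ≤ n)]
  · rw [if_neg hg, if_neg hg]

lemma Ffin_eq_Hfun (n : ℕ) (t : ℕ → ℂ) : Ffin n t = Hfun t n := by
  rw [Ffin, Ffun, Hfun]
  congr 1
  have hvan : ∀ m ∉ Finset.range n,
      (-1 : ℂ) ^ (m + 1) * Fterm (fun k => if 1 ≤ k ∧ k ≤ n then t k else 0) (m + 1) = 0 := by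
    intro m hm
    rw [Finset.mem_range, not_lt] at hm
    rw [Fterm_eq, Gm_eq_zero t (by omega), mul_zero]
  rw [tsum_eq_sum hvan]
  exact Finset.sum_congr rfl fun m _ => by rw [Fterm_eq]

lemma det_eq (d b t : ℕ → ℂ) :
    ∀ n : ℕ, (∀ k, 1 ≤ k → k + 1 ≤ n → d k * d (k + 1) * (t k * t (k + 1)) = b k ^ 2) →
      (Amat d b n).det = (∏ k ∈ Finset.Icc 1 n, d k) * Hfun t n := by
  intro n
  induction n using Nat.twoStepInduction with
  | zero =>
    intro _
    rw [Matrix.det_fin_zero, Hfun_zero, Finset.Icc_eq_empty (by omega), Finset.prod_empty]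
    ring
  | one =>
    intro _
    rw [Matrix.det_fin_one, Hfun_one, Finset.Icc_self, Finset.prod_singleton]
    rw [Amat_apply, if_pos rfl]
    norm_num
  | more n ih1 ih2 =>
    intro hrel
    rw [det_Amat_rec, ih2 (fun k hk hk' => hrel k hk (by omega)),
      ih1 (fun k hk hk' => hrel k hk (by omega)), Hfun_rec]
    have hP2 : ∏ k ∈ Finset.Icc 1 (n + 2), d k
        = ((∏ k ∈ Finset.Icc 1 n, d k) * d (n + 1)) * d (n + 2) := by
      rw [Finset.prod_Icc_succ_top (by omega), Finset.prod_Icc_succ_top (by omega)]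
    have hP1 : ∏ k ∈ Finset.Icc 1 (n + 1), d k
        = (∏ k ∈ Finset.Icc 1 n, d k) * d (n + 1) :=
      Finset.prod_Icc_succ_top (by omega) _
    rw [hP2, hP1]
    have hb := hrel (n + 1) (by omega) (by omega)
    linear_combination ((∏ k ∈ Finset.Icc 1 n, d k) * Hfun t n) * hb

/-- det(J_n − z·I) = (∏_{k=1}^n (λ_k − z))·𝔉(γ₁²/(λ₁−z),…,γ_n²/(λ_n−z)), where J_n is
the n×n Jacobi matrix with diagonal λ and off-diagonal w, γ₁ = 1, γ_{k+1} = w_k/γ_k, and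
z is distinct from every λ_k. (Sequences are 1-indexed; index 0 is ignored.) -/
theorem det_jacobi_eq_charfun (n : ℕ) (hn : 1 ≤ n) (lam w γ : ℕ → ℂ)
    (hw : ∀ k, 1 ≤ k → w k ≠ 0)
    (hγ1 : γ 1 = 1) (hγ : ∀ k, 1 ≤ k → γ (k + 1) = w k / γ k)
    (J : Matrix (Fin n) (Fin n) ℂ)
    (hJ : ∀ i j : Fin n, J i j =
      if i = j then lam ((i : ℕ) + 1)
      else if (j : ℕ) = (i : ℕ) + 1 ∨ (i : ℕ) = (j : ℕ) + 1 then w (min (i : ℕ) (j : ℕ) + 1)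
      else 0)
    (z : ℂ) (hz : ∀ k, 1 ≤ k → k ≤ n → z ≠ lam k) :
    Matrix.det (J - z • (1 : Matrix (Fin n) (Fin n) ℂ)) =
      (∏ k ∈ Finset.Icc 1 n, (lam k - z)) *
        Ffin n (fun k => γ k ^ 2 / (lam k - z)) := by
  have hγne : ∀ k, 1 ≤ k → γ k ≠ 0 := by
    intro k hk
    induction k with
    | zero => omega
    | succ k ih =>
      rcases Nat.eq_zero_or_pos k with h1 | h1
      · subst h1; rw [hγ1]; exact one_ne_zero
      · rw [hγ k h1]
        exact div_ne_zero (hw k h1) (ih h1)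
  have hprod : ∀ k, 1 ≤ k → γ k * γ (k + 1) = w k := by
    intro k hk
    rw [hγ k hk, mul_comm, div_mul_cancel₀ _ (hγne k hk)]
  have hrel : ∀ k, 1 ≤ k → k + 1 ≤ n →
      (lam k - z) * (lam (k + 1) - z) *
        ((γ k ^ 2 / (lam k - z)) * (γ (k + 1) ^ 2 / (lam (k + 1) - z))) = w k ^ 2 := by
    intro k hk hk1
    have hdk : lam k - z ≠ 0 := sub_ne_zero_of_ne (Ne.symm (hz k hk (by omega)))
    have hdk1 : lam (k + 1) - z ≠ 0 := sub_ne_zero_of_ne (Ne.symm (hz (k + 1) (by omega) hk1))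
    have h1 : (lam k - z) * (lam (k + 1) - z) *
        ((γ k ^ 2 / (lam k - z)) * (γ (k + 1) ^ 2 / (lam (k + 1) - z)))
        = (γ k * γ (k + 1)) ^ 2 := by
      field_simp
    rw [h1, hprod k hk]
  have hA : J - z • (1 : Matrix (Fin n) (Fin n) ℂ)
      = Amat (fun k => lam k - z) w n := by
    ext i j
    rw [Matrix.sub_apply, hJ, Amat_apply, Matrix.smul_apply]
    by_cases hij : i = j
    · subst hij
      rw [if_pos rfl, if_pos rfl, Matrix.one_apply_eq, smul_eq_mul, mul_one]
    · rw [if_neg hij, if_neg (fun h => hij (Fin.ext h)), Matrix.one_apply_ne hij,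
        smul_eq_mul, mul_zero, sub_zero]
  rw [hA, det_eq (fun k => lam k - z) w (fun k => γ k ^ 2 / (lam k - z)) n hrel,
    Ffin_eq_Hfun n (fun k => γ k ^ 2 / (lam k - z))]
end
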